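/- arXiv:math-ph/0412044 — 6 statements merged into one kernel-verified Lean document; each statement's English description precedes it below -/
import Mathlib

section
/- (Resolvent–weight integral estimate, Proposition 2.2, first bound.) There exists a constant C > 0 such that for every real t ≥ 1 and every p ∈ ℝ³ one has ∫_ℝ dα / ( ⟨α⟩ · | α − |p|²/2 + i/t | ) ≤ C · log♯ t. -/
noncomputable section

open MeasureTheory Complex

abbrev E3 := EuclideanSpace ℝ (Fin 3)

/-- The modified logarithm `log♯ t`: `1` for `t ≤ e` and `ln t` for `t > e`. -/
def logSharp (t : ℝ) : ℝ := if t ≤ Real.exp 1 then 1 else Real.log t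

/-- The Japanese bracket `⟨x⟩ = (1 + x²)^{1/2}` of a real number. -/
def jap (x : ℝ) : ℝ := Real.sqrt (1 + x ^ 2)

lemma jap_pos (x : ℝ) : 0 < jap x := Real.sqrt_pos.2 (by positivity)

lemma one_le_jap (x : ℝ) : 1 ≤ jap x := by
  have : (1 : ℝ) = Real.sqrt 1 := by simp
  rw [jap, this]
  exact Real.sqrt_le_sqrt (by nlinarith [sq_nonneg x])

lemma amgm_inv {J m : ℝ} (hJ : 0 < J) (hm : 0 < m) :
    1 / (J * m) ≤ ((J ^ 2)⁻¹ + (m ^ 2)⁻¹) / 2 := by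
  have e : ((J ^ 2)⁻¹ + (m ^ 2)⁻¹) / 2 - 1 / (J * m) = (1 / J - 1 / m) ^ 2 / 2 := by
    field_simp
    ring
  nlinarith [sq_nonneg (1 / J - 1 / m)]

lemma sqrt_int (a ε : ℝ) (hε : 0 < ε) :
    ∫ x in (a - 1)..(a + 1), (Real.sqrt ((x - a) ^ 2 + ε ^ 2))⁻¹
      = 2 * Real.arsinh (1 / ε) := by
  have hsne : ∀ x : ℝ, Real.sqrt ((x - a) ^ 2 + ε ^ 2) ≠ 0 := fun x =>
    ne_of_gt (Real.sqrt_pos.2 (by positivity))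
  have hF : ∀ x ∈ Set.uIcc (a - 1) (a + 1),
      HasDerivAt (fun x => Real.arsinh ((x - a) / ε))
        ((Real.sqrt ((x - a) ^ 2 + ε ^ 2))⁻¹) x := by
    intro x _
    have h1 : HasDerivAt (fun x : ℝ => (x - a) / ε) (1 / ε) x := by
      simpa [one_div] using ((hasDerivAt_id x).sub_const a).div_const ε
    have h2 := (Real.hasDerivAt_arsinh ((x - a) / ε)).comp x h1
    refine h2.congr_deriv ?_
    have hq : 1 + ((x - a) / ε) ^ 2 = ((x - a) ^ 2 + ε ^ 2) / ε ^ 2 := by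
      field_simp
      ring
    rw [hq, Real.sqrt_div' _ (by positivity), Real.sqrt_sq hε.le]
    field_simp
  have hc : Continuous fun x : ℝ => (Real.sqrt ((x - a) ^ 2 + ε ^ 2))⁻¹ := by
    apply Continuous.inv₀
    · exact Real.continuous_sqrt.comp (by continuity)
    · exact hsne
  rw [intervalIntegral.integral_eq_sub_of_hasDerivAt hF
    (hc.intervalIntegrable _ _)]
  have h1 : (a + 1 - a) / ε = 1 / ε := by ring_nf
  have h2 : (a - 1 - a) / ε = -(1 / ε) := by ring_nf
  rw [h1, h2, Real.arsinh_neg]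
  ring

set_option maxHeartbeats 2000000 in
/-- Resolvent–weight integral estimate (Proposition 2.2, first bound):
there is `C > 0` such that for all `t ≥ 1` and `p ∈ ℝ³`,
`∫_ℝ dα / (⟨α⟩ · |α - |p|²/2 + i/t|) ≤ C log♯ t`. -/
theorem alpha_weight_integral_estimate :
    ∃ C > 0, ∀ t : ℝ, 1 ≤ t → ∀ p : E3,
      (∫ α : ℝ, 1 / (jap α *
        ‖(α : ℂ) - ((‖p‖ ^ 2 / 2 : ℝ) : ℂ) + Complex.I * ((1 / t : ℝ) : ℂ)‖)) ≤
      C * logSharp t := by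
  refine ⟨12, by norm_num, fun t ht p => ?_⟩
  have ht0 : 0 < t := lt_of_lt_of_le one_pos ht
  set A : ℝ := ‖p‖ ^ 2 / 2 with hA
  set ε : ℝ := 1 / t with hεdef
  have hε0 : 0 < ε := by positivity
  have habs : ∀ α : ℝ, ‖(α : ℂ) - (A : ℂ) + Complex.I * (ε : ℂ)‖
      = Real.sqrt ((α - A) ^ 2 + ε ^ 2) := by
    intro α
    rw [Complex.norm_def, Complex.normSq_apply]
    simp only [Complex.add_re, Complex.sub_re, Complex.ofReal_re, Complex.mul_re,
      Complex.I_re, Complex.ofReal_im, Complex.I_im, Complex.add_im, Complex.sub_im,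
      Complex.mul_im]
    congr 1
    ring
  simp only [habs]
  -- majorants
  set g : ℝ → ℝ := Set.indicator (Set.Icc (A - 1) (A + 1))
    (fun x => (Real.sqrt ((x - A) ^ 2 + ε ^ 2))⁻¹) with hg
  set h : ℝ → ℝ := fun x => ((1 + x ^ 2)⁻¹ + 2 * (1 + (x - A) ^ 2)⁻¹) / 2 with hh
  have hcont : Continuous fun x : ℝ => (Real.sqrt ((x - A) ^ 2 + ε ^ 2))⁻¹ := by
    apply Continuous.inv₀
    · exact Real.continuous_sqrt.comp (by continuity)
    · exact fun x => ne_of_gt (Real.sqrt_pos.2 (by positivity))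
  have hg_int : Integrable g := by
    rw [hg, integrable_indicator_iff measurableSet_Icc]
    exact hcont.continuousOn.integrableOn_Icc
  have hh_int : Integrable h := by
    apply Integrable.div_const
    exact integrable_inv_one_add_sq.add
      ((integrable_inv_one_add_sq.comp_sub_right A).const_mul 2)
  have hh_nonneg : ∀ x, 0 ≤ h x := fun x => by
    rw [hh]; positivity
  -- pointwise bound
  have hpt : ∀ α : ℝ, 1 / (jap α * Real.sqrt ((α - A) ^ 2 + ε ^ 2)) ≤ g α + h α := by
    intro α
    have hJ := jap_pos α
    have hJ1 := one_le_jap α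
    have hs0 : 0 < Real.sqrt ((α - A) ^ 2 + ε ^ 2) := Real.sqrt_pos.2 (by positivity)
    by_cases hmem : α ∈ Set.Icc (A - 1) (A + 1)
    · have hgα : g α = (Real.sqrt ((α - A) ^ 2 + ε ^ 2))⁻¹ :=
        Set.indicator_of_mem hmem _
      have h1 : 1 / (jap α * Real.sqrt ((α - A) ^ 2 + ε ^ 2))
          ≤ (Real.sqrt ((α - A) ^ 2 + ε ^ 2))⁻¹ := by
        rw [one_div]
        exact inv_anti₀ hs0 (le_mul_of_one_le_left hs0.le hJ1)
      calc 1 / (jap α * Real.sqrt ((α - A) ^ 2 + ε ^ 2))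
          ≤ (Real.sqrt ((α - A) ^ 2 + ε ^ 2))⁻¹ := h1
        _ ≤ g α + h α := by rw [hgα]; linarith [hh_nonneg α]
    · have hgα : g α = 0 := Set.indicator_of_notMem hmem _
      have hm : 1 < |α - A| := by
        by_contra hle
        push_neg at hle
        rcases abs_le.1 hle with ⟨h1, h2⟩
        exact hmem (Set.mem_Icc.2 ⟨by linarith, by linarith⟩)
      have hm0 : 0 < |α - A| := lt_trans one_pos hm
      have hs : |α - A| ≤ Real.sqrt ((α - A) ^ 2 + ε ^ 2) := by
        rw [← Real.sqrt_sq_eq_abs]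
        exact Real.sqrt_le_sqrt (by nlinarith [sq_nonneg ε])
      have hJsq : jap α ^ 2 = 1 + α ^ 2 := Real.sq_sqrt (by positivity)
      have step1 : 1 / (jap α * Real.sqrt ((α - A) ^ 2 + ε ^ 2))
          ≤ 1 / (jap α * |α - A|) := by
        apply one_div_le_one_div_of_le (mul_pos hJ hm0)
        exact mul_le_mul_of_nonneg_left hs hJ.le
      have step2 : 1 / (jap α * |α - A|)
          ≤ ((jap α ^ 2)⁻¹ + (|α - A| ^ 2)⁻¹) / 2 := amgm_inv hJ hm0
      have habs2 : |α - A| ^ 2 = (α - A) ^ 2 := sq_abs _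
      have step3 : ((α - A) ^ 2)⁻¹ ≤ 2 * (1 + (α - A) ^ 2)⁻¹ := by
        have hu2 : 1 < (α - A) ^ 2 := by
          rw [← habs2]; nlinarith
        have e1 : ((α - A) ^ 2)⁻¹ = 1 / ((α - A) ^ 2) := (one_div _).symm
        have e2 : 2 * (1 + (α - A) ^ 2)⁻¹ = 2 / (1 + (α - A) ^ 2) :=
          (div_eq_mul_inv 2 _).symm
        rw [e1, e2, div_le_div_iff₀ (by nlinarith) (by nlinarith)]
        nlinarith
      calc 1 / (jap α * Real.sqrt ((α - A) ^ 2 + ε ^ 2))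
          ≤ ((jap α ^ 2)⁻¹ + (|α - A| ^ 2)⁻¹) / 2 := le_trans step1 step2
        _ ≤ ((1 + α ^ 2)⁻¹ + 2 * (1 + (α - A) ^ 2)⁻¹) / 2 := by
            rw [hJsq, habs2]
            linarith [step3]
        _ = h α := by rw [hh]
        _ ≤ g α + h α := by rw [hgα]; simp
  -- integrals of majorants
  have hIg : ∫ x, g x = 2 * Real.arsinh t := by
    rw [hg, integral_indicator measurableSet_Icc,
      MeasureTheory.integral_Icc_eq_integral_Ioc,
      ← intervalIntegral.integral_of_le (by linarith : A - 1 ≤ A + 1),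
      sqrt_int A ε hε0]
    congr 1
    rw [hεdef]
    field_simp
  have hπ : (∫ x : ℝ, (1 + (x - A) ^ 2)⁻¹) = Real.pi := by
    rw [integral_sub_right_eq_self (fun x : ℝ => (1 + x ^ 2)⁻¹) A]
    exact integral_univ_inv_one_add_sq
  have hIh : ∫ x, h x = 3 * Real.pi / 2 := by
    rw [hh]
    rw [integral_div, integral_add integrable_inv_one_add_sq
      ((integrable_inv_one_add_sq.comp_sub_right A).const_mul 2),
      integral_const_mul, integral_univ_inv_one_add_sq, hπ]
    ring
  have hmono : (∫ α : ℝ, 1 / (jap α * Real.sqrt ((α - A) ^ 2 + ε ^ 2)))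
      ≤ ∫ α : ℝ, (g α + h α) := by
    apply integral_mono_of_nonneg
    · exact ae_of_all _ fun α => le_of_lt
        (div_pos one_pos (mul_pos (jap_pos α) (Real.sqrt_pos.2 (by positivity))))
    · exact hg_int.add hh_int
    · exact ae_of_all _ hpt
  rw [integral_add hg_int hh_int, hIg, hIh] at hmono
  -- numeric estimates
  have hL1 : 1 ≤ logSharp t := by
    rw [logSharp]
    split_ifs with hte
    · exact le_refl 1
    · push_neg at hte
      rw [← Real.log_exp 1]
      exact Real.log_le_log (Real.exp_pos 1) hte.le
  have hlogle : Real.log t ≤ logSharp t := by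
    rw [logSharp]
    split_ifs with hte
    · calc Real.log t ≤ Real.log (Real.exp 1) := Real.log_le_log ht0 hte
        _ = 1 := Real.log_exp 1
    · exact le_refl _
  have harsinh : Real.arsinh t ≤ Real.log t + 2 := by
    have he : Real.exp (Real.arsinh t) = t + Real.sqrt (1 + t ^ 2) := Real.exp_arsinh t
    have hsq : Real.sqrt (1 + t ^ 2) ≤ 1 + t := by
      rw [show (1 : ℝ) + t = Real.sqrt ((1 + t) ^ 2) from
        (Real.sqrt_sq (by linarith)).symm]
      exact Real.sqrt_le_sqrt (by nlinarith)
    have h3t : t + Real.sqrt (1 + t ^ 2) ≤ 3 * t := by linarith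
    have : Real.arsinh t = Real.log (t + Real.sqrt (1 + t ^ 2)) := by
      rw [← he, Real.log_exp]
    rw [this]
    calc Real.log (t + Real.sqrt (1 + t ^ 2)) ≤ Real.log (3 * t) :=
          Real.log_le_log (by positivity) h3t
      _ = Real.log 3 + Real.log t := Real.log_mul (by norm_num) (by linarith)
      _ ≤ Real.log t + 2 := by
          have := Real.log_le_sub_one_of_pos (show (0:ℝ) < 3 by norm_num)
          linarith
  have hpi := Real.pi_le_four
  calc (∫ α : ℝ, 1 / (jap α * Real.sqrt ((α - A) ^ 2 + ε ^ 2)))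
      ≤ 2 * Real.arsinh t + 3 * Real.pi / 2 := hmono
    _ ≤ 2 * (Real.log t + 2) + 6 := by linarith
    _ ≤ 2 * logSharp t + 10 * logSharp t := by nlinarith
    _ = 12 * logSharp t := by ring
end
end

section
/- (Resolvent–weight integral estimate, Proposition 2.2, second bound.) There exists a constant C > 0 such that for every real t ≥ 1 and every α ∈ ℝ one has ∫_{ℝ³} ⟨α⟩ dp / ( ⟨p⟩⁴ · | α − |p|²/2 + i/t | ) ≤ C · log♯ t. -/
noncomputable section

open MeasureTheory Complex

/-- The Japanese bracket `⟨p⟩ = (1 + |p|²)^{1/2}` of a vector in `ℝ³`. -/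
def japV (p : E3) : ℝ := Real.sqrt (1 + ‖p‖ ^ 2)

namespace MomAux

open Set

lemma one_le_logSharp {t : ℝ} (ht : 1 ≤ t) : 1 ≤ logSharp t := by
  rw [logSharp]
  split
  · exact le_refl 1
  · rename_i h
    push_neg at h
    calc (1:ℝ) = Real.log (Real.exp 1) := (Real.log_exp 1).symm
    _ ≤ Real.log t := Real.log_le_log (Real.exp_pos 1) h.le

lemma log_le_logSharp {t : ℝ} (ht : 1 ≤ t) : Real.log t ≤ logSharp t := by
  rw [logSharp]
  split
  · rename_i h
    calc Real.log t ≤ Real.log (Real.exp 1) := Real.log_le_log (by linarith) h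
    _ = 1 := Real.log_exp 1
  · exact le_refl _

lemma B_pos (t α u : ℝ) (ht : 0 < t) : 0 < Real.sqrt ((u-α)^2 + (1/t)^2) := by
  apply Real.sqrt_pos.2
  have h2 : (0:ℝ) < (1/t)^2 := pow_pos (one_div_pos.2 ht) 2
  nlinarith [sq_nonneg (u-α)]

lemma abs_le_B (t α u : ℝ) : |α - u| ≤ Real.sqrt ((u-α)^2 + (1/t)^2) := by
  rw [show |α - u| = Real.sqrt ((u-α)^2) by rw [Real.sqrt_sq_eq_abs, abs_sub_comm]]
  exact Real.sqrt_le_sqrt (by nlinarith [sq_nonneg (1/t)])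

lemma B_ge_inv_t (t α u : ℝ) (ht : 0 < t) : 1/t ≤ Real.sqrt ((u-α)^2 + (1/t)^2) := by
  conv_lhs => rw [show (1/t : ℝ) = Real.sqrt ((1/t)^2) by rw [Real.sqrt_sq (by positivity)]]
  exact Real.sqrt_le_sqrt (by nlinarith [sq_nonneg (u-α)])

lemma jap_le (α u : ℝ) (hu : 0 ≤ u) : jap α ≤ 1 + u + |α - u| := by
  rw [jap]
  have h : 1 + α^2 ≤ (1 + u + |α - u|)^2 := by
    nlinarith [le_abs_self (α-u), neg_abs_le (α-u), _root_.sq_abs (α-u), abs_nonneg (α-u),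
      abs_sub_comm α u]
  calc Real.sqrt (1 + α^2) ≤ Real.sqrt ((1 + u + |α - u|)^2) := Real.sqrt_le_sqrt h
  _ = 1 + u + |α - u| := Real.sqrt_sq (by positivity)

lemma cabs_eq (α x s : ℝ) :
    ‖(α:ℂ) - ((x:ℝ):ℂ) + Complex.I*((s:ℝ):ℂ)‖ = Real.sqrt ((x-α)^2 + s^2) := by
  rw [Complex.norm_def, Complex.normSq_apply]
  simp
  ring_nf


lemma G1_integrableOn : IntegrableOn (fun u : ℝ => 4 * ((1+u) * Real.sqrt (1+u))⁻¹) (Ioi (0:ℝ))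
    ∧ ∫ u in Ioi (0:ℝ), 4 * ((1+u) * Real.sqrt (1+u))⁻¹ = 8 := by
  have hderiv : ∀ u ∈ Ioi (0:ℝ), HasDerivAt (fun u : ℝ => -8 * (Real.sqrt (1+u))⁻¹)
      (4 * ((1+u) * Real.sqrt (1+u))⁻¹) u := by
    intro u hu
    have hu' : (0:ℝ) < u := mem_Ioi.1 hu
    have h1 : HasDerivAt (fun u : ℝ => 1+u) 1 u := by simpa using (hasDerivAt_id u).const_add (1:ℝ)
    have h2 := (Real.hasDerivAt_sqrt (by positivity : (1+u) ≠ 0)).comp u h1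
    have hs : 0 < Real.sqrt (1+u) := Real.sqrt_pos.2 (by linarith)
    have h3 := (h2.inv (by positivity)).const_mul (-8 : ℝ)
    refine h3.congr_deriv (Eq.symm ?_)
    have hsq : Real.sqrt (1+u) * Real.sqrt (1+u) = 1+u := Real.mul_self_sqrt (by linarith)
    show 4 * ((1+u) * Real.sqrt (1+u))⁻¹ = -8 * (-(1 / (2 * Real.sqrt (1+u)) * 1) / Real.sqrt (1+u) ^ 2)
    field_simp
    nlinarith [hs, hsq]
  have hcont : ContinuousWithinAt (fun u : ℝ => -8 * (Real.sqrt (1+u))⁻¹) (Ici 0) 0 := by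
    apply ContinuousAt.continuousWithinAt
    have : Real.sqrt (1+(0:ℝ)) ≠ 0 := ne_of_gt (Real.sqrt_pos.2 (by norm_num))
    fun_prop (disch := assumption)
  have htend : Filter.Tendsto (fun u : ℝ => -8 * (Real.sqrt (1+u))⁻¹) Filter.atTop (nhds 0) := by
    have h1 : Filter.Tendsto (fun u : ℝ => Real.sqrt (1+u)) Filter.atTop Filter.atTop := by
      apply Filter.tendsto_atTop.2
      intro b
      filter_upwards [Filter.eventually_ge_atTop (b^2)] with u hu
      have hb : b ≤ Real.sqrt (b^2) := by
        rw [Real.sqrt_sq_eq_abs]; exact le_abs_self b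
      exact hb.trans (Real.sqrt_le_sqrt (by linarith))
    have := (h1.inv_tendsto_atTop).const_mul (-8:ℝ)
    simpa using this
  have hpos : ∀ u ∈ Ioi (0:ℝ), 0 ≤ 4 * ((1+u) * Real.sqrt (1+u))⁻¹ := by
    intro u hu; have := mem_Ioi.1 hu; positivity
  constructor
  · exact integrableOn_Ioi_deriv_of_nonneg hcont hderiv hpos htend
  · rw [integral_Ioi_of_hasDerivAt_of_nonneg hcont hderiv hpos htend]
    norm_num

lemma G2_spec (t α : ℝ) (ht : 1 ≤ t) :
    Integrable (indicator (Icc (α-1) (α+1)) (fun u => (Real.sqrt ((u-α)^2 + (1/t)^2))⁻¹))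
    ∧ ∫ u, indicator (Icc (α-1) (α+1)) (fun u => (Real.sqrt ((u-α)^2 + (1/t)^2))⁻¹) u
        ≤ 4 + 2*Real.log t := by
  have ht0 : (0:ℝ) < t := by linarith
  have hBpos : ∀ u : ℝ, 0 < Real.sqrt ((u-α)^2 + (1/t)^2) := fun u => B_pos t α u ht0
  have hcontB : Continuous (fun u : ℝ => (Real.sqrt ((u-α)^2 + (1/t)^2))⁻¹) := by
    apply Continuous.inv₀
    · fun_prop
    · intro x; exact ne_of_gt (hBpos x)
  have hint : IntegrableOn (fun u : ℝ => (Real.sqrt ((u-α)^2 + (1/t)^2))⁻¹) (Icc (α-1) (α+1)) :=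
    hcontB.continuousOn.integrableOn_compact isCompact_Icc
  have hInd : Integrable
      (indicator (Icc (α-1) (α+1)) (fun u => (Real.sqrt ((u-α)^2 + (1/t)^2))⁻¹)) :=
    (integrable_indicator_iff measurableSet_Icc).2 hint
  refine ⟨hInd, ?_⟩
  rw [integral_indicator measurableSet_Icc, integral_Icc_eq_integral_Ioc,
    ← intervalIntegral.integral_of_le (by linarith)]
  have key : ∀ u : ℝ, HasDerivAt (fun u : ℝ => Real.arsinh ((u-α)*t))
      ((Real.sqrt ((u-α)^2 + (1/t)^2))⁻¹) u := by
    intro u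
    have h1 : HasDerivAt (fun u : ℝ => (u-α)*t) t u := by
      simpa using ((hasDerivAt_id u).sub_const α).mul_const t
    have h2 := (Real.hasDerivAt_arsinh ((u-α)*t)).comp u h1
    refine h2.congr_deriv (Eq.symm ?_)
    have e1 : 1 + ((u-α)*t)^2 = ((u-α)^2 + (1/t)^2) * t^2 := by
      field_simp; ring
    rw [e1, Real.sqrt_mul (by positivity), Real.sqrt_sq ht0.le]
    rw [mul_inv, eq_comm]
    field_simp
  rw [intervalIntegral.integral_eq_sub_of_hasDerivAt (fun u _ => key u)
    (hcontB.intervalIntegrable _ _)]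
  have harsinh : Real.arsinh ((α+1-α)*t) - Real.arsinh ((α-1-α)*t) = 2 * Real.arsinh t := by
    rw [show (α+1-α)*t = t by ring, show (α-1-α)*t = -t by ring, Real.arsinh_neg]
    ring
  rw [harsinh]
  have hb : Real.arsinh t ≤ 2 + Real.log t := by
    rw [Real.arsinh]
    have h1 : Real.sqrt (1 + t^2) ≤ 1 + t := by
      calc Real.sqrt (1+t^2) ≤ Real.sqrt ((1+t)^2) := Real.sqrt_le_sqrt (by nlinarith)
      _ = 1 + t := Real.sqrt_sq (by linarith)
    calc Real.log (t + Real.sqrt (1+t^2)) ≤ Real.log (3*t) := by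
          apply Real.log_le_log (by positivity)
          nlinarith
    _ = Real.log 3 + Real.log t := Real.log_mul (by norm_num) (by positivity)
    _ ≤ 2 + Real.log t := by
          have : Real.log 3 ≤ 3 - 1 := Real.log_le_sub_one_of_pos (by norm_num)
          linarith
  linarith

lemma G3b_spec (α : ℝ) (hα : 2 < α) :
    Integrable (indicator (Icc (α+1) (2*α)) (fun u => (Real.sqrt α * |u-α|)⁻¹))
    ∧ ∫ u, indicator (Icc (α+1) (2*α)) (fun u => (Real.sqrt α * |u-α|)⁻¹) u ≤ 2 := by
  have hs : 0 < Real.sqrt α := Real.sqrt_pos.2 (by linarith)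
  have hcont : ContinuousOn (fun u : ℝ => (Real.sqrt α * |u-α|)⁻¹) (Icc (α+1) (2*α)) := by
    apply ContinuousOn.inv₀
    · fun_prop
    · intro u hu
      have h1 : α + 1 ≤ u := hu.1
      have : |u - α| > 0 := abs_pos.2 (by intro h; rw [sub_eq_zero] at h; linarith)
      positivity
  have hint : IntegrableOn (fun u : ℝ => (Real.sqrt α * |u-α|)⁻¹) (Icc (α+1) (2*α)) :=
    hcont.integrableOn_compact isCompact_Icc
  have hInd : Integrable (indicator (Icc (α+1) (2*α)) (fun u => (Real.sqrt α * |u-α|)⁻¹)) :=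
    (integrable_indicator_iff measurableSet_Icc).2 hint
  refine ⟨hInd, ?_⟩
  rw [integral_indicator measurableSet_Icc, integral_Icc_eq_integral_Ioc,
    ← intervalIntegral.integral_of_le (by linarith)]
  have hval : ∫ u in (α+1)..(2*α), (Real.sqrt α * |u-α|)⁻¹ = Real.log α * (Real.sqrt α)⁻¹ := by
    have hcong : ∀ u ∈ Set.uIcc (α+1) (2*α),
        (Real.sqrt α * |u-α|)⁻¹ = (Real.sqrt α)⁻¹ * (u-α)⁻¹ := by
      intro u hu
      rw [Set.uIcc_of_le (by linarith)] at hu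
      rw [abs_of_pos (by linarith [hu.1]), mul_inv]
    rw [intervalIntegral.integral_congr hcong]
    have key : ∀ u ∈ Set.uIcc (α+1) (2*α),
        HasDerivAt (fun u : ℝ => (Real.sqrt α)⁻¹ * Real.log (u-α))
        ((Real.sqrt α)⁻¹ * (u-α)⁻¹) u := by
      intro u hu
      rw [Set.uIcc_of_le (by linarith)] at hu
      have h1 : HasDerivAt (fun u : ℝ => u - α) 1 u := (hasDerivAt_id u).sub_const α
      have h2 := (h1.log (by intro h; rw [sub_eq_zero] at h; linarith [hu.1])).const_mul
        ((Real.sqrt α)⁻¹)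
      simpa using h2
    rw [intervalIntegral.integral_eq_sub_of_hasDerivAt key ?_]
    · rw [show 2*α - α = α by ring, show α + 1 - α = 1 by ring, Real.log_one]
      ring
    · apply ContinuousOn.intervalIntegrable
      apply ContinuousOn.mul continuousOn_const
      apply ContinuousOn.inv₀ (by fun_prop)
      intro u hu
      rw [Set.uIcc_of_le (by linarith)] at hu
      have : α + 1 ≤ u := hu.1
      intro h; rw [sub_eq_zero] at h; linarith
  rw [hval]
  have hlog : Real.log α ≤ 2 * Real.sqrt α := by
    have h1 : Real.log (Real.sqrt α) ≤ Real.sqrt α - 1 := Real.log_le_sub_one_of_pos hs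
    have h2 : Real.log α = 2 * Real.log (Real.sqrt α) := by
      rw [Real.log_sqrt (by linarith : (0:ℝ) ≤ α)]; ring
    linarith
  calc Real.log α * (Real.sqrt α)⁻¹ ≤ (2 * Real.sqrt α) * (Real.sqrt α)⁻¹ := by
        apply mul_le_mul_of_nonneg_right hlog (by positivity)
  _ = 2 := by field_simp

lemma G3a_spec (α : ℝ) (hα : 2 < α) :
    Integrable (indicator (Icc 0 (α-1)) (fun u => (Real.sqrt α * |u-α|)⁻¹))
    ∧ ∫ u, indicator (Icc 0 (α-1)) (fun u => (Real.sqrt α * |u-α|)⁻¹) u ≤ 2 := by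
  have hs : 0 < Real.sqrt α := Real.sqrt_pos.2 (by linarith)
  have hcont : ContinuousOn (fun u : ℝ => (Real.sqrt α * |u-α|)⁻¹) (Icc 0 (α-1)) := by
    apply ContinuousOn.inv₀
    · fun_prop
    · intro u hu
      have h1 : u ≤ α - 1 := hu.2
      have : |u - α| > 0 := abs_pos.2 (by intro h; rw [sub_eq_zero] at h; linarith)
      positivity
  have hint : IntegrableOn (fun u : ℝ => (Real.sqrt α * |u-α|)⁻¹) (Icc 0 (α-1)) :=
    hcont.integrableOn_compact isCompact_Icc
  have hInd : Integrable (indicator (Icc 0 (α-1)) (fun u => (Real.sqrt α * |u-α|)⁻¹)) :=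
    (integrable_indicator_iff measurableSet_Icc).2 hint
  refine ⟨hInd, ?_⟩
  rw [integral_indicator measurableSet_Icc, integral_Icc_eq_integral_Ioc,
    ← intervalIntegral.integral_of_le (by linarith)]
  have hval : ∫ u in (0:ℝ)..(α-1), (Real.sqrt α * |u-α|)⁻¹ = Real.log α * (Real.sqrt α)⁻¹ := by
    have hcong : ∀ u ∈ Set.uIcc (0:ℝ) (α-1),
        (Real.sqrt α * |u-α|)⁻¹ = (Real.sqrt α)⁻¹ * (α-u)⁻¹ := by
      intro u hu
      rw [Set.uIcc_of_le (by linarith)] at hu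
      rw [abs_of_neg (by linarith [hu.2]), neg_sub, mul_inv]
    rw [intervalIntegral.integral_congr hcong]
    have key : ∀ u ∈ Set.uIcc (0:ℝ) (α-1),
        HasDerivAt (fun u : ℝ => -((Real.sqrt α)⁻¹ * Real.log (α-u)))
        ((Real.sqrt α)⁻¹ * (α-u)⁻¹) u := by
      intro u hu
      rw [Set.uIcc_of_le (by linarith)] at hu
      have h1 : HasDerivAt (fun u : ℝ => α - u) (-1) u := by
        simpa using (hasDerivAt_id u).const_sub α
      have h2 := ((h1.log (by intro h; rw [sub_eq_zero] at h; linarith [hu.2])).const_mul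
        ((Real.sqrt α)⁻¹)).neg
      refine h2.congr_deriv (Eq.symm ?_)
      field_simp
    rw [intervalIntegral.integral_eq_sub_of_hasDerivAt key ?_]
    · rw [show α - (α-1) = 1 by ring, show α - 0 = α by ring, Real.log_one]
      ring
    · apply ContinuousOn.intervalIntegrable
      apply ContinuousOn.mul continuousOn_const
      apply ContinuousOn.inv₀ (by fun_prop)
      intro u hu
      rw [Set.uIcc_of_le (by linarith)] at hu
      have : u ≤ α - 1 := hu.2
      intro h; rw [sub_eq_zero] at h; linarith
  rw [hval]
  have hlog : Real.log α ≤ 2 * Real.sqrt α := by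
    have h1 : Real.log (Real.sqrt α) ≤ Real.sqrt α - 1 := Real.log_le_sub_one_of_pos hs
    have h2 : Real.log α = 2 * Real.log (Real.sqrt α) := by
      rw [Real.log_sqrt (by linarith : (0:ℝ) ≤ α)]; ring
    linarith
  calc Real.log α * (Real.sqrt α)⁻¹ ≤ (2 * Real.sqrt α) * (Real.sqrt α)⁻¹ := by
        apply mul_le_mul_of_nonneg_right hlog (by positivity)
  _ = 2 := by field_simp


lemma pointwise_core (t α u : ℝ) (ht : 1 ≤ t) (hu : 0 < u) :
    Real.sqrt (2*u) * ((1+2*u) * Real.sqrt ((u-α)^2 + (1/t)^2))⁻¹ ≤ 4*((1+u)*Real.sqrt (1+u))⁻¹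
    ∨ Real.sqrt (2*u) * ((1+2*u) * Real.sqrt ((u-α)^2 + (1/t)^2))⁻¹
        ≤ indicator (Icc (α-1) (α+1)) (fun u => (Real.sqrt ((u-α)^2 + (1/t)^2))⁻¹) u
    ∨ (2 < α ∧
      (Real.sqrt (2*u) * ((1+2*u) * Real.sqrt ((u-α)^2 + (1/t)^2))⁻¹
          ≤ indicator (Icc 0 (α-1)) (fun u => (Real.sqrt α * |u-α|)⁻¹) u
        ∨ Real.sqrt (2*u) * ((1+2*u) * Real.sqrt ((u-α)^2 + (1/t)^2))⁻¹
          ≤ indicator (Icc (α+1) (2*α)) (fun u => (Real.sqrt α * |u-α|)⁻¹) u)) := by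
  have ht0 : (0:ℝ) < t := by linarith
  set B := Real.sqrt ((u-α)^2 + (1/t)^2) with hBdef
  have hB : 0 < B := B_pos t α u ht0
  have hBabs : |u - α| ≤ B := by
    rw [abs_sub_comm]; exact abs_le_B t α u
  set S := Real.sqrt (1+2*u) with hSdef
  have hS1 : 1 ≤ S := Real.one_le_sqrt.2 (by linarith)
  have hS0 : 0 < S := by linarith
  have hSS : S * S = 1 + 2*u := Real.mul_self_sqrt (by linarith)
  have hmain : Real.sqrt (2*u) * ((1+2*u) * B)⁻¹ ≤ (S * B)⁻¹ := by
    have h1 : Real.sqrt (2*u) ≤ S := Real.sqrt_le_sqrt (by linarith)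
    have h2 : (0:ℝ) ≤ ((1+2*u) * B)⁻¹ := by positivity
    calc Real.sqrt (2*u) * ((1+2*u) * B)⁻¹ ≤ S * ((1+2*u) * B)⁻¹ :=
          mul_le_mul_of_nonneg_right h1 h2
    _ = (S * B)⁻¹ := by
          rw [← hSS]; field_simp
  by_cases h1 : |u - α| ≤ 1
  · right; left
    have hmem : u ∈ Icc (α-1) (α+1) := by
      rcases abs_le.1 h1 with ⟨ha, hb⟩
      exact ⟨by linarith, by linarith⟩
    rw [indicator_of_mem hmem]
    refine hmain.trans ?_
    rw [mul_inv]
    calc S⁻¹ * B⁻¹ ≤ 1 * B⁻¹ := by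
          apply mul_le_mul_of_nonneg_right _ (by positivity)
          rw [inv_le_one_iff₀]; right; exact hS1
    _ = B⁻¹ := one_mul _
  · push_neg at h1
    by_cases h2 : (1+u)/4 ≤ |u - α|
    · left
      refine hmain.trans ?_
      have hSu : Real.sqrt (1+u) ≤ S := Real.sqrt_le_sqrt (by linarith)
      have hsu0 : 0 < Real.sqrt (1+u) := Real.sqrt_pos.2 (by linarith)
      have hprod : Real.sqrt (1+u) * ((1+u)/4) ≤ S * B := by
        apply mul_le_mul hSu (le_trans h2 hBabs) (by positivity) (by positivity)
      calc (S*B)⁻¹ ≤ (Real.sqrt (1+u) * ((1+u)/4))⁻¹ := by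
            apply inv_anti₀ (by positivity) hprod
      _ = 4*((1+u)*Real.sqrt (1+u))⁻¹ := by
            field_simp
    · push_neg at h2
      have habs1 : u - α ≤ |u - α| := le_abs_self _
      have habs2 : α - u ≤ |u - α| := by rw [abs_sub_comm]; exact le_abs_self _
      have hu3 : 3 < u := by linarith
      have hα2 : 2 < α := by linarith
      have hαS : Real.sqrt α ≤ S := Real.sqrt_le_sqrt (by linarith)
      have hαpos : (0:ℝ) < Real.sqrt α := Real.sqrt_pos.2 (by linarith)
      have hbound : (S*B)⁻¹ ≤ (Real.sqrt α * |u-α|)⁻¹ := by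
        apply inv_anti₀ (by positivity)
        exact mul_le_mul hαS hBabs (abs_nonneg _) (by positivity)
      have hu2α : u ≤ 2*α := by linarith
      right; right
      refine ⟨hα2, ?_⟩
      rcases lt_abs.1 h1 with hc | hc
      · -- u - α > 1
        right
        have hmem : u ∈ Icc (α+1) (2*α) := ⟨by linarith, hu2α⟩
        rw [indicator_of_mem hmem]
        exact hmain.trans hbound
      · -- α - u > 1
        left
        have hmem : u ∈ Icc 0 (α-1) := ⟨hu.le, by linarith⟩
        rw [indicator_of_mem hmem]
        exact hmain.trans hbound

lemma oneD_bound (t α : ℝ) (ht : 1 ≤ t) :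
    ∫ u in Ioi (0:ℝ), Real.sqrt (2*u) * ((1+2*u) * Real.sqrt ((u-α)^2 + (1/t)^2))⁻¹
      ≤ 16 + 2*Real.log t := by
  have ht0 : (0:ℝ) < t := by linarith
  set G1 : ℝ → ℝ := fun u => 4*((1+u)*Real.sqrt (1+u))⁻¹ with hG1def
  set G2 : ℝ → ℝ := indicator (Icc (α-1) (α+1)) (fun u => (Real.sqrt ((u-α)^2 + (1/t)^2))⁻¹)
    with hG2def
  have hG1nonneg : ∀ u ∈ Ioi (0:ℝ), 0 ≤ G1 u := by
    intro u hu
    have : (0:ℝ) < u := mem_Ioi.1 hu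
    rw [hG1def]; positivity
  have hG2nonneg : ∀ u : ℝ, 0 ≤ G2 u := by
    intro u
    apply indicator_nonneg
    intro x _; positivity
  have hfnonneg : ∀ᵐ u ∂(volume.restrict (Ioi (0:ℝ))),
      0 ≤ Real.sqrt (2*u) * ((1+2*u) * Real.sqrt ((u-α)^2 + (1/t)^2))⁻¹ := by
    rw [ae_restrict_iff' measurableSet_Ioi]
    apply ae_of_all
    intro u hu
    have hu' : (0:ℝ) < u := mem_Ioi.1 hu
    positivity
  by_cases hα : 2 < α
  · -- with G3 terms
    set G3a : ℝ → ℝ := indicator (Icc 0 (α-1)) (fun u => (Real.sqrt α * |u-α|)⁻¹) with hG3adef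
    set G3b : ℝ → ℝ := indicator (Icc (α+1) (2*α)) (fun u => (Real.sqrt α * |u-α|)⁻¹) with hG3bdef
    have hG3anonneg : ∀ u : ℝ, 0 ≤ G3a u := by
      intro u; apply indicator_nonneg; intro x _; positivity
    have hG3bnonneg : ∀ u : ℝ, 0 ≤ G3b u := by
      intro u; apply indicator_nonneg; intro x _; positivity
    have hInt : Integrable (fun u => G1 u + G2 u + G3a u + G3b u)
        (volume.restrict (Ioi (0:ℝ))) := by
      exact ((G1_integrableOn.1.add ((G2_spec t α ht).1.restrict)).add
        ((G3a_spec α hα).1.restrict)).add ((G3b_spec α hα).1.restrict)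
    have hmono : ∀ᵐ u ∂(volume.restrict (Ioi (0:ℝ))),
        Real.sqrt (2*u) * ((1+2*u) * Real.sqrt ((u-α)^2 + (1/t)^2))⁻¹
          ≤ G1 u + G2 u + G3a u + G3b u := by
      rw [ae_restrict_iff' measurableSet_Ioi]
      apply ae_of_all
      intro u hu
      have hu' : (0:ℝ) < u := mem_Ioi.1 hu
      have h1 := hG1nonneg u hu
      have h2 := hG2nonneg u
      have h3 := hG3anonneg u
      have h4 := hG3bnonneg u
      have e1 : G1 u = 4*((1+u)*Real.sqrt (1+u))⁻¹ := rfl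
      have e2 : G2 u = indicator (Icc (α-1) (α+1))
        (fun u => (Real.sqrt ((u-α)^2 + (1/t)^2))⁻¹) u := rfl
      have e3 : G3a u = indicator (Icc 0 (α-1)) (fun u => (Real.sqrt α * |u-α|)⁻¹) u := rfl
      have e4 : G3b u = indicator (Icc (α+1) (2*α)) (fun u => (Real.sqrt α * |u-α|)⁻¹) u := rfl
      rcases pointwise_core t α u ht hu' with h | h | ⟨_, h | h⟩ <;> linarith
    calc ∫ u in Ioi (0:ℝ), Real.sqrt (2*u) * ((1+2*u) * Real.sqrt ((u-α)^2 + (1/t)^2))⁻¹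
        ≤ ∫ u in Ioi (0:ℝ), (G1 u + G2 u + G3a u + G3b u) :=
          integral_mono_of_nonneg hfnonneg hInt hmono
    _ = (∫ u in Ioi (0:ℝ), (G1 u + G2 u + G3a u)) + (∫ u in Ioi (0:ℝ), G3b u) :=
          integral_add ((G1_integrableOn.1.add ((G2_spec t α ht).1.restrict)).add
            ((G3a_spec α hα).1.restrict)) ((G3b_spec α hα).1.restrict)
    _ = (∫ u in Ioi (0:ℝ), (G1 u + G2 u)) + (∫ u in Ioi (0:ℝ), G3a u)
          + (∫ u in Ioi (0:ℝ), G3b u) :=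
          congrArg (fun x => x + ∫ u in Ioi (0:ℝ), G3b u)
            (integral_add (G1_integrableOn.1.add ((G2_spec t α ht).1.restrict))
              ((G3a_spec α hα).1.restrict))
    _ = (∫ u in Ioi (0:ℝ), G1 u) + (∫ u in Ioi (0:ℝ), G2 u) + (∫ u in Ioi (0:ℝ), G3a u)
          + (∫ u in Ioi (0:ℝ), G3b u) :=
          congrArg (fun x => x + (∫ u in Ioi (0:ℝ), G3a u) + ∫ u in Ioi (0:ℝ), G3b u)
            (integral_add (G1_integrableOn.1) ((G2_spec t α ht).1.restrict))
    _ ≤ 8 + (4 + 2*Real.log t) + 2 + 2 := by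
          have e1 : ∫ u in Ioi (0:ℝ), G1 u = 8 := G1_integrableOn.2
          have e2 : ∫ u in Ioi (0:ℝ), G2 u ≤ 4 + 2*Real.log t :=
            (setIntegral_le_integral (G2_spec t α ht).1
              (ae_of_all _ hG2nonneg)).trans (G2_spec t α ht).2
          have e3 : ∫ u in Ioi (0:ℝ), G3a u ≤ 2 :=
            (setIntegral_le_integral (G3a_spec α hα).1
              (ae_of_all _ hG3anonneg)).trans (G3a_spec α hα).2
          have e4 : ∫ u in Ioi (0:ℝ), G3b u ≤ 2 :=
            (setIntegral_le_integral (G3b_spec α hα).1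
              (ae_of_all _ hG3bnonneg)).trans (G3b_spec α hα).2
          linarith
    _ = 16 + 2*Real.log t := by ring
  · -- α ≤ 2 : no G3 terms
    push_neg at hα
    have hInt : Integrable (fun u => G1 u + G2 u) (volume.restrict (Ioi (0:ℝ))) :=
      G1_integrableOn.1.add ((G2_spec t α ht).1.restrict)
    have hmono : ∀ᵐ u ∂(volume.restrict (Ioi (0:ℝ))),
        Real.sqrt (2*u) * ((1+2*u) * Real.sqrt ((u-α)^2 + (1/t)^2))⁻¹ ≤ G1 u + G2 u := by
      rw [ae_restrict_iff' measurableSet_Ioi]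
      apply ae_of_all
      intro u hu
      have hu' : (0:ℝ) < u := mem_Ioi.1 hu
      have h1 := hG1nonneg u hu
      have h2 := hG2nonneg u
      have e1 : G1 u = 4*((1+u)*Real.sqrt (1+u))⁻¹ := rfl
      have e2 : G2 u = indicator (Icc (α-1) (α+1))
        (fun u => (Real.sqrt ((u-α)^2 + (1/t)^2))⁻¹) u := rfl
      rcases pointwise_core t α u ht hu' with h | h | ⟨h3, _⟩
      · linarith
      · linarith
      · linarith
    have hlog : 0 ≤ Real.log t := Real.log_nonneg ht
    calc ∫ u in Ioi (0:ℝ), Real.sqrt (2*u) * ((1+2*u) * Real.sqrt ((u-α)^2 + (1/t)^2))⁻¹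
        ≤ ∫ u in Ioi (0:ℝ), (G1 u + G2 u) := integral_mono_of_nonneg hfnonneg hInt hmono
    _ = (∫ u in Ioi (0:ℝ), G1 u) + (∫ u in Ioi (0:ℝ), G2 u) :=
          integral_add G1_integrableOn.1 ((G2_spec t α ht).1.restrict)
    _ ≤ 8 + (4 + 2*Real.log t) := by
          have e1 : ∫ u in Ioi (0:ℝ), G1 u = 8 := G1_integrableOn.2
          have e2 : ∫ u in Ioi (0:ℝ), G2 u ≤ 4 + 2*Real.log t :=
            (setIntegral_le_integral (G2_spec t α ht).1
              (ae_of_all _ hG2nonneg)).trans (G2_spec t α ht).2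
          linarith
    _ ≤ 16 + 2*Real.log t := by linarith


lemma japV_pow (p : E3) : japV p ^ 4 = (1 + ‖p‖^2)^2 := by
  rw [japV, show (4:ℕ) = 2*2 from rfl, pow_mul, Real.sq_sqrt (by positivity)]

lemma pointwise3D (t α : ℝ) (ht : 1 ≤ t) (p : E3) :
    jap α / (japV p ^ 4 * ‖(α : ℂ) - ((‖p‖ ^ 2 / 2 : ℝ) : ℂ)
        + Complex.I * ((1 / t : ℝ) : ℂ)‖) ≤
      ((1+‖p‖^2) * Real.sqrt ((‖p‖^2/2-α)^2 + (1/t)^2))⁻¹ + ((1+‖p‖^2)^2)⁻¹ := by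
  have ht0 : (0:ℝ) < t := lt_of_lt_of_le one_pos ht
  rw [japV_pow, cabs_eq α (‖p‖^2/2) (1/t)]
  set u : ℝ := ‖p‖^2/2 with hudef
  set B : ℝ := Real.sqrt ((u-α)^2+(1/t)^2) with hBdef
  have hB : 0 < B := B_pos t α u ht0
  have hu : 0 ≤ u := by rw [hudef]; positivity
  have hX : (0:ℝ) < 1 + ‖p‖^2 := by positivity
  have hup : u ≤ ‖p‖^2 := by rw [hudef]; nlinarith [sq_nonneg ‖p‖]
  have hjap : jap α ≤ (1+‖p‖^2) + B := by
    have h1 := jap_le α u hu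
    have h2 : |α - u| ≤ B := abs_le_B t α u
    linarith
  rw [div_le_iff₀ (by positivity)]
  have hexpand : (((1+‖p‖^2) * B)⁻¹ + ((1+‖p‖^2)^2)⁻¹) * ((1+‖p‖^2)^2*B)
      = (1+‖p‖^2) + B := by
    field_simp
  rw [hexpand]
  exact hjap

lemma gB_integrable : Integrable (fun p : E3 => ((1+‖p‖^2)^2)⁻¹) := by
  have h := integrable_rpow_neg_one_add_norm_sq (E := E3) (μ := volume) (r := 4)
    (by simp; norm_num)
  have he : ∀ p : E3, ((1:ℝ)+‖p‖^2)^(-(4:ℝ)/2) = ((1+‖p‖^2)^2)⁻¹ := by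
    intro p
    rw [show (-(4:ℝ)/2) = -(2:ℝ) by norm_num, Real.rpow_neg (by positivity),
      show ((2:ℝ)) = ((2:ℕ):ℝ) by norm_num, Real.rpow_natCast]
  exact (integrable_congr (ae_of_all _ he)).1 h

lemma gA_integrable (t α : ℝ) (ht : 1 ≤ t) :
    Integrable (fun p : E3 =>
      ((1+‖p‖^2) * Real.sqrt ((‖p‖^2/2-α)^2 + (1/t)^2))⁻¹) := by
  have ht0 : (0:ℝ) < t := lt_of_lt_of_le one_pos ht
  set R : ℝ := Real.sqrt (4*|α|+4) with hRdef
  have hmeas : AEStronglyMeasurable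
      (fun p : E3 => ((1+‖p‖^2) * Real.sqrt ((‖p‖^2/2-α)^2 + (1/t)^2))⁻¹) volume := by
    apply Continuous.aestronglyMeasurable
    apply Continuous.inv₀
    · fun_prop
    · intro p
      have h1 := B_pos t α (‖p‖^2/2) ht0
      positivity
  have hmajInt : Integrable (fun p : E3 =>
      8 * ((1+‖p‖^2)^2)⁻¹ + indicator (Metric.closedBall (0:E3) R) (fun _ => t) p) := by
    apply (gB_integrable.const_mul 8).add
    apply (integrable_indicator_iff Metric.isClosed_closedBall.measurableSet).2
    exact integrableOn_const measure_closedBall_lt_top.ne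
  apply hmajInt.mono' hmeas
  apply ae_of_all
  intro p
  have hBp := B_pos t α (‖p‖^2/2) ht0
  have hX : (0:ℝ) < 1 + ‖p‖^2 := by positivity
  have hnonneg : (0:ℝ) ≤ ((1+‖p‖^2) * Real.sqrt ((‖p‖^2/2-α)^2 + (1/t)^2))⁻¹ := by positivity
  rw [Real.norm_eq_abs, _root_.abs_of_nonneg hnonneg]
  by_cases hp : ‖p‖ ≤ R
  · have hmem : p ∈ Metric.closedBall (0:E3) R := by
      rw [Metric.mem_closedBall, dist_zero_right]; exact hp
    rw [indicator_of_mem hmem]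
    have h1 : ((1+‖p‖^2) * Real.sqrt ((‖p‖^2/2-α)^2 + (1/t)^2))⁻¹ ≤ t := by
      have h2 : (1:ℝ)/t ≤ Real.sqrt ((‖p‖^2/2-α)^2 + (1/t)^2) := B_ge_inv_t t α _ ht0
      have h3 : (1:ℝ) ≤ 1 + ‖p‖^2 := by nlinarith [sq_nonneg ‖p‖]
      have h5 : t⁻¹ ≤ (1+‖p‖^2) * Real.sqrt ((‖p‖^2/2-α)^2 + (1/t)^2) := by
        calc (t:ℝ)⁻¹ = 1 * (1/t) := by rw [one_mul, one_div]
        _ ≤ (1+‖p‖^2) * Real.sqrt ((‖p‖^2/2-α)^2 + (1/t)^2) :=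
              mul_le_mul h3 h2 (by positivity) (by positivity)
      calc ((1+‖p‖^2) * Real.sqrt ((‖p‖^2/2-α)^2 + (1/t)^2))⁻¹ ≤ (t⁻¹)⁻¹ :=
            inv_anti₀ (by positivity) h5
      _ = t := inv_inv t
    have h8 : (0:ℝ) ≤ 8 * ((1+‖p‖^2)^2)⁻¹ := by positivity
    linarith
  · push_neg at hp
    have hmem : p ∉ Metric.closedBall (0:E3) R := by
      rw [Metric.mem_closedBall, dist_zero_right]; linarith
    rw [indicator_of_notMem hmem]
    have hR2 : R^2 = 4*|α|+4 := Real.sq_sqrt (by positivity)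
    have hp2 : 4*|α|+4 < ‖p‖^2 := by
      rw [← hR2]
      have hR0 : 0 ≤ R := Real.sqrt_nonneg _
      nlinarith
    have hBlow : (1+‖p‖^2)/4 ≤ Real.sqrt ((‖p‖^2/2-α)^2 + (1/t)^2) := by
      have h1 : |α - ‖p‖^2/2| ≤ Real.sqrt ((‖p‖^2/2-α)^2 + (1/t)^2) := abs_le_B t α _
      have h2 : (1+‖p‖^2)/4 ≤ |α - ‖p‖^2/2| := by
        have h3 : ‖p‖^2/2 - α ≤ |α - ‖p‖^2/2| := by
          rw [abs_sub_comm]; exact le_abs_self _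
        have h4 : α ≤ |α| := le_abs_self α
        linarith
      linarith
    have hfinal : ((1+‖p‖^2) * Real.sqrt ((‖p‖^2/2-α)^2 + (1/t)^2))⁻¹
        ≤ 8 * ((1+‖p‖^2)^2)⁻¹ := by
      have h5 : (1+‖p‖^2) * ((1+‖p‖^2)/4) ≤
          (1+‖p‖^2) * Real.sqrt ((‖p‖^2/2-α)^2 + (1/t)^2) :=
        mul_le_mul_of_nonneg_left hBlow (by positivity)
      calc ((1+‖p‖^2) * Real.sqrt ((‖p‖^2/2-α)^2 + (1/t)^2))⁻¹
          ≤ ((1+‖p‖^2) * ((1+‖p‖^2)/4))⁻¹ := inv_anti₀ (by positivity) h5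
      _ = 4 * ((1+‖p‖^2)^2)⁻¹ := by field_simp
      _ ≤ 8 * ((1+‖p‖^2)^2)⁻¹ := by
            have : (0:ℝ) ≤ ((1+‖p‖^2)^2)⁻¹ := by positivity
            linarith
    linarith


lemma polar_reduce (t α : ℝ) :
    ∫ p : E3, ((1+‖p‖^2) * Real.sqrt ((‖p‖^2/2-α)^2 + (1/t)^2))⁻¹
      = 3 • (volume (Metric.ball (0:E3) 1)).toReal •
          ∫ r in Ioi (0:ℝ), r^2 • ((1+r^2) * Real.sqrt ((r^2/2-α)^2 + (1/t)^2))⁻¹ := by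
  have := MeasureTheory.integral_fun_norm_addHaar (volume : Measure E3)
    (fun r => ((1+r^2) * Real.sqrt ((r^2/2-α)^2 + (1/t)^2))⁻¹)
  simpa [Measure.real] using this

lemma radial_cov (t α : ℝ) (ht : 1 ≤ t) :
    ∫ r in Ioi (0:ℝ), r^2 • ((1+r^2) * Real.sqrt ((r^2/2-α)^2 + (1/t)^2))⁻¹
      = ∫ u in Ioi (0:ℝ), Real.sqrt (2*u) * ((1+2*u) * Real.sqrt ((u-α)^2 + (1/t)^2))⁻¹ := by
  have himg : (fun u : ℝ => Real.sqrt (2*u)) '' (Ioi 0) = Ioi 0 := by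
    ext r
    constructor
    · rintro ⟨u, hu, rfl⟩
      exact mem_Ioi.2 (Real.sqrt_pos.2 (by linarith [mem_Ioi.1 hu]))
    · intro hr
      have hr' : 0 < r := mem_Ioi.1 hr
      refine ⟨r^2/2, mem_Ioi.2 (by positivity), ?_⟩
      show Real.sqrt (2*(r^2/2)) = r
      rw [show 2*(r^2/2) = r^2 by ring, Real.sqrt_sq hr'.le]
  have hderiv : ∀ u ∈ Ioi (0:ℝ), HasDerivWithinAt (fun u => Real.sqrt (2*u))
      ((Real.sqrt (2*u))⁻¹) (Ioi 0) u := by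
    intro u hu
    have hu' : 0 < u := mem_Ioi.1 hu
    have h1 : HasDerivAt (fun u : ℝ => 2*u) 2 u := by
      simpa using (hasDerivAt_id u).const_mul (2:ℝ)
    have h2 := (Real.hasDerivAt_sqrt (by positivity : (2*u) ≠ 0)).comp u h1
    have hs : 0 < Real.sqrt (2*u) := Real.sqrt_pos.2 (by linarith)
    have : 1 / (2 * Real.sqrt (2*u)) * 2 = (Real.sqrt (2*u))⁻¹ := by
      field_simp
    rw [← this]
    exact h2.hasDerivWithinAt
  have hinj : InjOn (fun u : ℝ => Real.sqrt (2*u)) (Ioi 0) := by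
    intro a ha b hb h
    have := congrArg (fun x : ℝ => x^2) h
    simp only [Real.sq_sqrt (by linarith [mem_Ioi.1 ha] : (0:ℝ) ≤ 2*a),
      Real.sq_sqrt (by linarith [mem_Ioi.1 hb] : (0:ℝ) ≤ 2*b)] at this
    linarith
  conv_lhs => rw [← himg]
  rw [integral_image_eq_integral_abs_deriv_smul measurableSet_Ioi hderiv hinj
    (fun r => r^2 • ((1+r^2) * Real.sqrt ((r^2/2-α)^2 + (1/t)^2))⁻¹)]
  apply setIntegral_congr_fun measurableSet_Ioi
  intro u hu
  have hu' : (0:ℝ) < u := mem_Ioi.1 hu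
  have h2u : (Real.sqrt (2*u))^2 = 2*u := Real.sq_sqrt (by linarith)
  have hs : 0 < Real.sqrt (2*u) := Real.sqrt_pos.2 (by linarith)
  have hss : Real.sqrt (2*u) * Real.sqrt (2*u) = 2*u := Real.mul_self_sqrt (by linarith)
  simp only [smul_eq_mul, h2u]
  rw [show (2*u/2 : ℝ) = u by ring,
    _root_.abs_of_nonneg (inv_nonneg.2 (Real.sqrt_nonneg _))]
  rw [← hss]
  field_simp
  ring_nf
  rw [Real.sqrt_sq (Real.sqrt_nonneg _)]

end MomAux

open MomAux Set in
/-- Resolvent–weight integral estimate (Proposition 2.2, second bound):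
there is `C > 0` such that for all `t ≥ 1` and `α ∈ ℝ`,
`∫_{ℝ³} ⟨α⟩ dp / (⟨p⟩⁴ · |α - |p|²/2 + i/t|) ≤ C log♯ t`. -/
theorem momentum_weight_integral_estimate :
    ∃ C > 0, ∀ t : ℝ, 1 ≤ t → ∀ α : ℝ,
      (∫ p : E3, jap α / (japV p ^ 4 *
        ‖(α : ℂ) - ((‖p‖ ^ 2 / 2 : ℝ) : ℂ) + Complex.I * ((1 / t : ℝ) : ℂ)‖)) ≤
      C * logSharp t := by
  set cB : ℝ := ∫ p : E3, ((1+‖p‖^2)^2)⁻¹ with hcBdef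
  set vB : ℝ := (volume (Metric.ball (0:E3) 1)).toReal with hvBdef
  have hcB : 0 ≤ cB := by
    rw [hcBdef]
    apply integral_nonneg
    intro p
    positivity
  have hvB : 0 ≤ vB := ENNReal.toReal_nonneg
  refine ⟨cB + 54 * vB + 1, by linarith, ?_⟩
  intro t ht α
  have ht0 : (0:ℝ) < t := lt_of_lt_of_le one_pos ht
  have h0 : 0 ≤ᵐ[volume] (fun p : E3 => jap α / (japV p ^ 4 *
      ‖(α : ℂ) - ((‖p‖ ^ 2 / 2 : ℝ) : ℂ) + Complex.I * ((1 / t : ℝ) : ℂ)‖)) := by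
    apply ae_of_all
    intro p
    apply div_nonneg (Real.sqrt_nonneg _)
    apply mul_nonneg _ (norm_nonneg _)
    exact pow_nonneg (Real.sqrt_nonneg _) 4
  have hIg : Integrable (fun p : E3 =>
      ((1+‖p‖^2) * Real.sqrt ((‖p‖^2/2-α)^2 + (1/t)^2))⁻¹ + ((1+‖p‖^2)^2)⁻¹) :=
    (gA_integrable t α ht).add gB_integrable
  have h1 : (∫ p : E3, jap α / (japV p ^ 4 *
        ‖(α : ℂ) - ((‖p‖ ^ 2 / 2 : ℝ) : ℂ) + Complex.I * ((1 / t : ℝ) : ℂ)‖))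
      ≤ ∫ p : E3, (((1+‖p‖^2) * Real.sqrt ((‖p‖^2/2-α)^2 + (1/t)^2))⁻¹ + ((1+‖p‖^2)^2)⁻¹) :=
    integral_mono_of_nonneg h0 hIg (ae_of_all _ (fun p => pointwise3D t α ht p))
  have h2 : (∫ p : E3, (((1+‖p‖^2) * Real.sqrt ((‖p‖^2/2-α)^2 + (1/t)^2))⁻¹
        + ((1+‖p‖^2)^2)⁻¹))
      = (∫ p : E3, ((1+‖p‖^2) * Real.sqrt ((‖p‖^2/2-α)^2 + (1/t)^2))⁻¹) + cB :=
    integral_add (gA_integrable t α ht) gB_integrable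
  have h3 := polar_reduce t α
  have h4 := radial_cov t α ht
  have h5 := oneD_bound t α ht
  have hgA : (∫ p : E3, ((1+‖p‖^2) * Real.sqrt ((‖p‖^2/2-α)^2 + (1/t)^2))⁻¹)
      ≤ 3 * vB * (16 + 2*Real.log t) := by
    rw [h3, h4]
    rw [smul_eq_mul, nsmul_eq_mul]
    push_cast
    calc (3:ℝ) * (vB * ∫ u in Ioi (0:ℝ),
          Real.sqrt (2*u) * ((1+2*u) * Real.sqrt ((u-α)^2 + (1/t)^2))⁻¹)
        ≤ 3 * (vB * (16 + 2*Real.log t)) := by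
          apply mul_le_mul_of_nonneg_left _ (by norm_num)
          exact mul_le_mul_of_nonneg_left h5 hvB
    _ = 3 * vB * (16 + 2*Real.log t) := by ring
  have hL1 : 1 ≤ logSharp t := one_le_logSharp ht
  have hL2 : Real.log t ≤ logSharp t := log_le_logSharp ht
  have e1 : 6*vB*Real.log t ≤ 6*vB*logSharp t :=
    mul_le_mul_of_nonneg_left hL2 (by positivity)
  have e2 : 48*vB ≤ 48*vB*logSharp t := by nlinarith
  have e3 : cB ≤ cB*logSharp t := by nlinarith
  have hL0 : 0 ≤ logSharp t := by linarith
  calc (∫ p : E3, jap α / (japV p ^ 4 *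
        ‖(α : ℂ) - ((‖p‖ ^ 2 / 2 : ℝ) : ℂ) + Complex.I * ((1 / t : ℝ) : ℂ)‖))
      ≤ (∫ p : E3, ((1+‖p‖^2) * Real.sqrt ((‖p‖^2/2-α)^2 + (1/t)^2))⁻¹) + cB := by
        rw [← h2]; exact h1
  _ ≤ 3 * vB * (16 + 2*Real.log t) + cB := by linarith
  _ ≤ (cB + 54 * vB + 1) * logSharp t := by nlinarith
end
end

section
/- (Translated resolvent integral estimate, Proposition 2.2, fourth bound.) There exists a constant C > 0 such that for every real t ≥ 1, every r ∈ ℝ³ and every α ∈ ℝ one has ∫_{ℝ³} dp / ( ⟨p − r⟩⁴ · | α − |p|²/2 + i/t | ) ≤ C · log♯ t. -/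
noncomputable section

open MeasureTheory Complex

namespace ResolventAux

open Real Set

def w (q : E3) : ℝ := ((1 + ‖q‖ ^ 2) ^ 2)⁻¹

lemma w_nonneg (q : E3) : 0 ≤ w q := by unfold w; positivity

lemma continuous_w : Continuous w := by
  apply Continuous.inv₀
  · exact (continuous_const.add ((continuous_norm).pow 2)).pow 2
  · intro q
    positivity

lemma integrable_w : Integrable w := by
  have h4 : ((Module.finrank ℝ E3 : ℝ) < 4) := by
    simp only [finrank_euclideanSpace, Fintype.card_fin]
    norm_num
  have hint : Integrable (fun q : E3 => (1 + ‖q‖) ^ (-(4:ℝ))) := integrable_one_add_norm h4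
  apply (hint.const_mul 4).mono' continuous_w.aestronglyMeasurable
  filter_upwards with q
  have hq : (0:ℝ) ≤ ‖q‖ := norm_nonneg q
  have h2 : (1 + ‖q‖) ^ (-(4:ℝ)) = ((1 + ‖q‖) ^ (4:ℕ))⁻¹ := by
    rw [Real.rpow_neg (by positivity)]
    rw [show (4:ℝ) = ((4:ℕ):ℝ) by norm_num, Real.rpow_natCast]
  rw [Real.norm_eq_abs, _root_.abs_of_nonneg (w_nonneg q), w, h2]
  have h3 : ((1 + ‖q‖ ^ 2) ^ 2)⁻¹ ≤ ((1 + ‖q‖) ^ (4:ℕ) / 4)⁻¹ := by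
    apply inv_anti₀ (by positivity)
    nlinarith [sq_nonneg (1 - ‖q‖), mul_nonneg (mul_nonneg (sq_nonneg (1 - ‖q‖)) hq) hq,
      mul_nonneg (sq_nonneg (1 - ‖q‖)) hq, sq_nonneg ‖q‖]
  calc ((1 + ‖q‖ ^ 2) ^ 2)⁻¹ ≤ ((1 + ‖q‖) ^ (4:ℕ) / 4)⁻¹ := h3
    _ = 4 * ((1 + ‖q‖) ^ (4:ℕ))⁻¹ := by rw [inv_div, div_eq_mul_inv]

def Kw : ℝ := ∫ q : E3, w q

lemma Kw_nonneg : 0 ≤ Kw := integral_nonneg w_nonneg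

lemma lintegral_w (r : E3) :
    ∫⁻ p : E3, ENNReal.ofReal (w (p - r)) = ENNReal.ofReal Kw := by
  calc ∫⁻ p : E3, ENNReal.ofReal (w (p - r))
      = ∫⁻ p : E3, (fun q => ENNReal.ofReal (w q)) (p + (-r)) := by
        simp [sub_eq_add_neg]
    _ = ∫⁻ q : E3, ENNReal.ofReal (w q) := by
        simpa using lintegral_add_right_eq_self (fun q : E3 => ENNReal.ofReal (w q)) (-r)
    _ = ENNReal.ofReal Kw :=
        (ofReal_integral_eq_lintegral_ofReal integrable_w (ae_of_all _ w_nonneg)).symm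

lemma oneD_bound (R : ℝ) :
    ∫⁻ x : ℝ, ENNReal.ofReal (((1 + (x - R) ^ 2) ^ 2)⁻¹) ≤ ENNReal.ofReal π := by
  have step : ∀ x : ℝ, ENNReal.ofReal (((1 + (x - R) ^ 2) ^ 2)⁻¹)
      ≤ (fun y => ENNReal.ofReal ((1 + y ^ 2)⁻¹)) (x + (-R)) := by
    intro x
    simp only [← sub_eq_add_neg]
    apply ENNReal.ofReal_le_ofReal
    apply inv_anti₀ (by positivity)
    nlinarith [sq_nonneg (x - R)]
  calc ∫⁻ x : ℝ, ENNReal.ofReal (((1 + (x - R) ^ 2) ^ 2)⁻¹)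
      ≤ ∫⁻ x : ℝ, (fun y => ENNReal.ofReal ((1 + y ^ 2)⁻¹)) (x + (-R)) := lintegral_mono step
    _ = ∫⁻ y : ℝ, ENNReal.ofReal ((1 + y ^ 2)⁻¹) := by
        simpa using lintegral_add_right_eq_self (fun y : ℝ => ENNReal.ofReal ((1 + y ^ 2)⁻¹)) (-R)
    _ = ENNReal.ofReal π := by
        rw [← ofReal_integral_eq_lintegral_ofReal integrable_inv_one_add_sq
          (ae_of_all _ fun x => by positivity), integral_univ_inv_one_add_sq]

lemma area_annulus (c d : ℝ) :
    volume {y : Fin 2 → ℝ | (∑ j, (y j) ^ 2) ∈ Icc c d} ≤ ENNReal.ofReal (π * (d - c)) := by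
  by_cases hd : 0 ≤ d ∧ c ≤ d
  · obtain ⟨hd0, hcd⟩ := hd
    set c' : ℝ := max c 0 with hc'
    have hc'0 : 0 ≤ c' := le_max_right _ _
    have hc'd : c' ≤ d := max_le hcd hd0
    -- transfer to Euclidean space
    have hmp := EuclideanSpace.volume_preserving_symm_measurableEquiv_toLp (Fin 2)
    have hset : MeasurableSet {y : Fin 2 → ℝ | (∑ j, (y j) ^ 2) ∈ Icc c d} := by
      apply measurableSet_preimage _ measurableSet_Icc
      exact Finset.measurable_sum _ fun j _ => (measurable_pi_apply j).pow_const 2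
    rw [← hmp.measure_preimage hset.nullMeasurableSet]
    have hpre : (MeasurableEquiv.toLp 2 (Fin 2 → ℝ)).symm ⁻¹'
        {y : Fin 2 → ℝ | (∑ j, (y j) ^ 2) ∈ Icc c d}
        ⊆ Metric.closedBall (0 : EuclideanSpace ℝ (Fin 2)) (Real.sqrt d) \
          Metric.ball 0 (Real.sqrt c') := by
      intro y hy
      have hy' : (∑ j, (y j) ^ 2) ∈ Icc c d := hy
      have hnorm : ‖y‖ ^ 2 = ∑ j, (y j) ^ 2 := by
        rw [EuclideanSpace.norm_eq, Real.sq_sqrt (by positivity)]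
        simp [sq_abs]
      constructor
      · simp only [Metric.mem_closedBall, dist_zero_right]
        have hle : ‖y‖ ^ 2 ≤ d := by rw [hnorm]; exact hy'.2
        calc ‖y‖ = Real.sqrt (‖y‖ ^ 2) := (Real.sqrt_sq (norm_nonneg y)).symm
          _ ≤ Real.sqrt d := Real.sqrt_le_sqrt hle
      · simp only [Metric.mem_ball, dist_zero_right, not_lt]
        have h1 : c' ≤ ‖y‖ ^ 2 := by
          rw [hnorm]; exact max_le hy'.1 (by positivity)
        calc Real.sqrt c' ≤ Real.sqrt (‖y‖ ^ 2) := Real.sqrt_le_sqrt h1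
          _ = ‖y‖ := Real.sqrt_sq (norm_nonneg y)
    have hballsub : Metric.ball (0 : EuclideanSpace ℝ (Fin 2)) (Real.sqrt c')
        ⊆ Metric.closedBall 0 (Real.sqrt d) :=
      Metric.ball_subset_closedBall.trans
        (Metric.closedBall_subset_closedBall (Real.sqrt_le_sqrt hc'd))
    have hG : Real.Gamma (((2:ℕ):ℝ) / 2 + 1) = 1 := by
      norm_num [Real.Gamma_two]
    have hvol_cb : volume (Metric.closedBall (0 : EuclideanSpace ℝ (Fin 2)) (Real.sqrt d))
        = ENNReal.ofReal (d * π) := by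
      rw [EuclideanSpace.volume_closedBall]
      simp only [Fintype.card_fin]
      rw [hG, ← ENNReal.ofReal_pow (Real.sqrt_nonneg d), Real.sq_sqrt hd0,
        Real.sq_sqrt Real.pi_nonneg]
      rw [← ENNReal.ofReal_mul hd0]
      norm_num
    have hvol_b : volume (Metric.ball (0 : EuclideanSpace ℝ (Fin 2)) (Real.sqrt c'))
        = ENNReal.ofReal (c' * π) := by
      rw [EuclideanSpace.volume_ball]
      simp only [Fintype.card_fin]
      rw [hG, ← ENNReal.ofReal_pow (Real.sqrt_nonneg c'), Real.sq_sqrt hc'0,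
        Real.sq_sqrt Real.pi_nonneg]
      rw [← ENNReal.ofReal_mul hc'0]
      norm_num
    calc volume ((MeasurableEquiv.toLp 2 (Fin 2 → ℝ)).symm ⁻¹'
          {y : Fin 2 → ℝ | (∑ j, (y j) ^ 2) ∈ Icc c d})
        ≤ volume (Metric.closedBall (0 : EuclideanSpace ℝ (Fin 2)) (Real.sqrt d) \
            Metric.ball 0 (Real.sqrt c')) := measure_mono hpre
      _ = volume (Metric.closedBall (0 : EuclideanSpace ℝ (Fin 2)) (Real.sqrt d)) -
            volume (Metric.ball (0 : EuclideanSpace ℝ (Fin 2)) (Real.sqrt c')) :=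
          measure_diff hballsub measurableSet_ball.nullMeasurableSet measure_ball_lt_top.ne
      _ = ENNReal.ofReal (d * π) - ENNReal.ofReal (c' * π) := by rw [hvol_cb, hvol_b]
      _ = ENNReal.ofReal (d * π - c' * π) := by
          rw [ENNReal.ofReal_sub _ (by positivity)]
      _ ≤ ENNReal.ofReal (π * (d - c)) := by
          apply ENNReal.ofReal_le_ofReal
          have : c ≤ c' := le_max_left _ _
          nlinarith [Real.pi_nonneg]
  · have hempty : {y : Fin 2 → ℝ | (∑ j, (y j) ^ 2) ∈ Icc c d} = ∅ := by
      ext y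
      simp only [mem_setOf_eq, mem_Icc, mem_empty_iff_false, iff_false, not_and]
      intro hc
      intro hd2
      exact hd ⟨le_trans (by positivity) hd2, le_trans hc hd2⟩
    rw [hempty, measure_empty]
    exact zero_le

lemma measurableSet_shell (a b : ℝ) : MeasurableSet {p : E3 | ‖p‖ ^ 2 ∈ Icc a b} := by
  apply measurableSet_preimage _ measurableSet_Icc
  exact (continuous_norm.pow 2).measurable

lemma nsq3 (p : E3) : ‖p‖ ^ 2 = ∑ i, (p i) ^ 2 := by
  rw [EuclideanSpace.norm_eq, Real.sq_sqrt (by positivity)]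
  simp [sq_abs]

lemma shell_single (R a b : ℝ) (hab : a ≤ b) :
    ∫⁻ p : E3 in {p : E3 | ‖p‖ ^ 2 ∈ Icc a b},
      ENNReal.ofReal (w (p - EuclideanSpace.single (0 : Fin 3) R))
      ≤ ENNReal.ofReal (π ^ 2 * (b - a)) := by
  set r0 : E3 := EuclideanSpace.single (0 : Fin 3) R with hr0
  have hr00 : r0 0 = R := by rw [hr0]; simp [EuclideanSpace.single_apply]
  have hr0s : ∀ j : Fin 2, r0 (Fin.succ j) = 0 := by
    intro j
    rw [hr0]
    simp [EuclideanSpace.single_apply, (Fin.succ_ne_zero j)]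
  rw [← lintegral_indicator (measurableSet_shell a b)]
  set G : (Fin 3 → ℝ) → ENNReal := fun x =>
    Set.indicator {x : Fin 3 → ℝ | (∑ i, (x i) ^ 2) ∈ Icc a b}
      (fun x => ENNReal.ofReal (((1 + ∑ i, (x i - r0 i) ^ 2) ^ 2)⁻¹)) x with hG
  have hGmeas : Measurable G := by
    apply Measurable.indicator
    · apply ENNReal.measurable_ofReal.comp
      apply Measurable.inv
      apply Measurable.pow_const
      apply Measurable.const_add
      exact Finset.measurable_sum _ fun i _ => ((measurable_pi_apply i).sub_const _).pow_const 2
    · apply measurableSet_preimage _ measurableSet_Icc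
      exact Finset.measurable_sum _ fun i _ => (measurable_pi_apply i).pow_const 2
  have key1 : ∀ p : E3,
      Set.indicator {p : E3 | ‖p‖ ^ 2 ∈ Icc a b}
        (fun p => ENNReal.ofReal (w (p - r0))) p
      = G ((MeasurableEquiv.toLp 2 (Fin 3 → ℝ)).symm p) := by
    intro p
    have hcoord : ∀ i, ((MeasurableEquiv.toLp 2 (Fin 3 → ℝ)).symm p) i = p i := fun _ => rfl
    have hsum : (∑ i, (((MeasurableEquiv.toLp 2 (Fin 3 → ℝ)).symm p) i) ^ 2) = ‖p‖ ^ 2 := by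
      rw [nsq3 p]
      exact Finset.sum_congr rfl fun i _ => by rw [hcoord i]
    have hsum2 : (∑ i, (((MeasurableEquiv.toLp 2 (Fin 3 → ℝ)).symm p) i - r0 i) ^ 2)
        = ‖p - r0‖ ^ 2 := by
      rw [nsq3 (p - r0)]
      apply Finset.sum_congr rfl
      intro i _
      congr 1
    by_cases hp : p ∈ {p : E3 | ‖p‖ ^ 2 ∈ Icc a b}
    · have hp2 : ((MeasurableEquiv.toLp 2 (Fin 3 → ℝ)).symm p)
          ∈ {x : Fin 3 → ℝ | (∑ i, (x i) ^ 2) ∈ Icc a b} := by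
        rw [mem_setOf_eq, hsum]; exact hp
      rw [Set.indicator_of_mem hp]
      simp only [hG]
      rw [Set.indicator_of_mem hp2, w, hsum2]
    · have hp2 : ((MeasurableEquiv.toLp 2 (Fin 3 → ℝ)).symm p)
          ∉ {x : Fin 3 → ℝ | (∑ i, (x i) ^ 2) ∈ Icc a b} := by
        rw [mem_setOf_eq, hsum]; exact hp
      rw [Set.indicator_of_notMem hp]
      simp only [hG]
      rw [Set.indicator_of_notMem hp2]
  have key2 : ∀ u : ℝ, ∀ y : Fin 2 → ℝ,
      G ((MeasurableEquiv.piFinSuccAbove (fun _ : Fin 3 => ℝ) 0).symm (u, y))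
      ≤ ENNReal.ofReal (((1 + (u - R) ^ 2) ^ 2)⁻¹) *
        Set.indicator {y : Fin 2 → ℝ | (∑ j, (y j) ^ 2) ∈ Icc (a - u ^ 2) (b - u ^ 2)}
          (fun _ => 1) y := by
    intro u y
    set x : Fin 3 → ℝ := (MeasurableEquiv.piFinSuccAbove (fun _ : Fin 3 => ℝ) 0).symm (u, y)
      with hx
    have hx' : x = Fin.insertNth (0 : Fin 3) u y := rfl
    have hx0 : x 0 = u := by rw [hx']; exact Fin.insertNth_apply_same (α := fun _ : Fin 3 => ℝ) (0 : Fin 3) u y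
    have hxs : ∀ j : Fin 2, x (Fin.succ j) = y j := by
      intro j
      rw [hx']
      exact Fin.insertNth_apply_succAbove (α := fun _ : Fin 3 => ℝ) (0 : Fin 3) u y j
    have hsqterm : ∀ j : Fin 2, x (Fin.succ j) ^ 2 = (y j) ^ 2 := fun j => by rw [hxs j]
    have hsumx : (∑ i, (x i) ^ 2) = u ^ 2 + ∑ j, (y j) ^ 2 := by
      rw [Fin.sum_univ_succ, hx0]
      simp only [hsqterm]
    have hsqterm2 : ∀ j : Fin 2, (x (Fin.succ j) - r0 (Fin.succ j)) ^ 2 = (y j) ^ 2 :=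
      fun j => by rw [hxs j, hr0s j, sub_zero]
    have hsumx2 : (∑ i, (x i - r0 i) ^ 2) = (u - R) ^ 2 + ∑ j, (y j) ^ 2 := by
      rw [Fin.sum_univ_succ, hx0, hr00]
      simp only [hsqterm2]
    have hS : (0:ℝ) ≤ ∑ j, (y j) ^ 2 := by positivity
    by_cases hmem : x ∈ {x : Fin 3 → ℝ | (∑ i, (x i) ^ 2) ∈ Icc a b}
    · have hmem2 : y ∈ {y : Fin 2 → ℝ | (∑ j, (y j) ^ 2) ∈ Icc (a - u ^ 2) (b - u ^ 2)} := by
        rw [mem_setOf_eq, mem_Icc]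
        have h1 := hmem
        rw [mem_setOf_eq, mem_Icc, hsumx] at h1
        constructor <;> linarith [h1.1, h1.2]
      simp only [hG]
      rw [Set.indicator_of_mem hmem, Set.indicator_of_mem hmem2, mul_one, hsumx2]
      apply ENNReal.ofReal_le_ofReal
      apply inv_anti₀ (by positivity)
      nlinarith [sq_nonneg (u - R), hS]
    · simp only [hG]
      rw [Set.indicator_of_notMem hmem]
      exact zero_le
  have hGm2 : Measurable fun z : ℝ × (Fin 2 → ℝ) =>
      G ((MeasurableEquiv.piFinSuccAbove (fun _ : Fin 3 => ℝ) 0).symm z) :=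
    hGmeas.comp (MeasurableEquiv.measurable _)
  have hAmeas : ∀ u : ℝ, MeasurableSet
      {y : Fin 2 → ℝ | (∑ j, (y j) ^ 2) ∈ Icc (a - u ^ 2) (b - u ^ 2)} := by
    intro u
    apply measurableSet_preimage _ measurableSet_Icc
    exact Finset.measurable_sum _ fun j _ => (measurable_pi_apply j).pow_const 2
  calc ∫⁻ p : E3, Set.indicator {p : E3 | ‖p‖ ^ 2 ∈ Icc a b}
        (fun p => ENNReal.ofReal (w (p - r0))) p
      = ∫⁻ p : E3, G ((MeasurableEquiv.toLp 2 (Fin 3 → ℝ)).symm p) := lintegral_congr key1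
    _ = ∫⁻ x : Fin 3 → ℝ, G x :=
        (EuclideanSpace.volume_preserving_symm_measurableEquiv_toLp (Fin 3)).lintegral_comp hGmeas
    _ = ∫⁻ z : ℝ × (Fin 2 → ℝ),
          G ((MeasurableEquiv.piFinSuccAbove (fun _ : Fin 3 => ℝ) 0).symm z) :=
        ((MeasurePreserving.symm _
          (volume_preserving_piFinSuccAbove (fun _ : Fin 3 => ℝ) 0)).lintegral_comp
          hGmeas).symm
    _ = ∫⁻ u : ℝ, ∫⁻ y : Fin 2 → ℝ,
          G ((MeasurableEquiv.piFinSuccAbove (fun _ : Fin 3 => ℝ) 0).symm (u, y)) := by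
        rw [Measure.volume_eq_prod, lintegral_prod _ hGm2.aemeasurable]
    _ ≤ ∫⁻ u : ℝ, ENNReal.ofReal (((1 + (u - R) ^ 2) ^ 2)⁻¹) * ENNReal.ofReal (π * (b - a)) := by
        apply lintegral_mono
        intro u
        calc ∫⁻ y : Fin 2 → ℝ,
              G ((MeasurableEquiv.piFinSuccAbove (fun _ : Fin 3 => ℝ) 0).symm (u, y))
            ≤ ∫⁻ y : Fin 2 → ℝ, ENNReal.ofReal (((1 + (u - R) ^ 2) ^ 2)⁻¹) *
              Set.indicator {y : Fin 2 → ℝ | (∑ j, (y j) ^ 2) ∈ Icc (a - u ^ 2) (b - u ^ 2)}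
                (fun _ => 1) y := lintegral_mono (key2 u)
          _ = ENNReal.ofReal (((1 + (u - R) ^ 2) ^ 2)⁻¹) *
              ∫⁻ y : Fin 2 → ℝ, Set.indicator
                {y : Fin 2 → ℝ | (∑ j, (y j) ^ 2) ∈ Icc (a - u ^ 2) (b - u ^ 2)}
                (fun _ => 1) y := by
              rw [lintegral_const_mul _ (measurable_const.indicator (hAmeas u))]
          _ ≤ ENNReal.ofReal (((1 + (u - R) ^ 2) ^ 2)⁻¹) * ENNReal.ofReal (π * (b - a)) := by
              apply mul_le_mul_right
              rw [lintegral_indicator (hAmeas u), setLIntegral_one]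
              have h := area_annulus (a - u ^ 2) (b - u ^ 2)
              have heq : (b - u ^ 2) - (a - u ^ 2) = b - a := by ring
              rwa [heq] at h
    _ = (∫⁻ u : ℝ, ENNReal.ofReal (((1 + (u - R) ^ 2) ^ 2)⁻¹)) * ENNReal.ofReal (π * (b - a)) := by
        rw [lintegral_mul_const]
        exact ENNReal.measurable_ofReal.comp
          ((((measurable_id.sub_const R).pow_const 2).const_add 1).pow_const 2).inv
    _ ≤ ENNReal.ofReal π * ENNReal.ofReal (π * (b - a)) :=
        mul_le_mul_left (oneD_bound R) _
    _ = ENNReal.ofReal (π ^ 2 * (b - a)) := by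
        rw [← ENNReal.ofReal_mul Real.pi_nonneg]
        ring_nf

lemma shell (r : E3) (a b : ℝ) :
    ∫⁻ p : E3 in {p : E3 | ‖p‖ ^ 2 ∈ Icc a b}, ENNReal.ofReal (w (p - r))
      ≤ ENNReal.ofReal (π ^ 2 * (b - a)) := by
  by_cases hab : a ≤ b
  swap
  · have hs : {p : E3 | ‖p‖ ^ 2 ∈ Icc a b} = ∅ := by
      rw [Icc_eq_empty hab]
      simp
    rw [hs, Measure.restrict_empty, lintegral_zero_measure]
    exact zero_le
  obtain ⟨T, hTmp, hTr⟩ : ∃ T : EuclideanSpace ℝ (Fin 3) ≃ₗᵢ[ℝ] E3,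
      MeasurePreserving T volume volume ∧ T (EuclideanSpace.single (0 : Fin 3) ‖r‖) = r := by
    rcases eq_or_ne r 0 with h0 | hr
    · refine ⟨LinearIsometryEquiv.refl ℝ E3, ?_, ?_⟩
      · exact MeasurePreserving.id volume
      · subst h0
        have h00 : EuclideanSpace.single (0 : Fin 3) ‖(0:E3)‖ = (0:E3) := by
          ext i
          rw [EuclideanSpace.single_apply]
          simp
        rw [h00]
        simp
    · have card : Module.finrank ℝ E3 = Fintype.card (Fin 3) := by
        simp [finrank_euclideanSpace]
      have horth : Orthonormal ℝ (({0} : Set (Fin 3)).restrict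
          (fun _ : Fin 3 => ‖r‖⁻¹ • r)) := by
        constructor
        · intro i
          show ‖‖r‖⁻¹ • r‖ = 1
          rw [norm_smul, norm_inv, norm_norm, inv_mul_cancel₀ (norm_ne_zero_iff.mpr hr)]
        · intro i j hij
          exfalso
          apply hij
          have hi := i.2
          have hj := j.2
          simp only [mem_singleton_iff] at hi hj
          exact Subtype.ext (hi.trans hj.symm)
      obtain ⟨B, hB⟩ := horth.exists_orthonormalBasis_extension_of_card_eq card
      refine ⟨B.repr.symm, B.measurePreserving_repr_symm, ?_⟩
      have h1 : EuclideanSpace.single (0 : Fin 3) ‖r‖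
          = ‖r‖ • EuclideanSpace.single (0 : Fin 3) (1:ℝ) := by
        ext i
        simp only [PiLp.smul_apply, EuclideanSpace.single_apply, smul_eq_mul]
        split_ifs <;> simp
      rw [h1, LinearIsometryEquiv.map_smul, OrthonormalBasis.repr_symm_single, hB 0 rfl]
      rw [smul_smul, mul_inv_cancel₀ (norm_ne_zero_iff.mpr hr), one_smul]
  have hwT : ∀ z : EuclideanSpace ℝ (Fin 3), w (T z) = w z := by
    intro z
    rw [w, w, T.norm_map]
  have hFmeas : Measurable fun p : E3 => Set.indicator {p : E3 | ‖p‖ ^ 2 ∈ Icc a b}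
      (fun p => ENNReal.ofReal (w (p - r))) p := by
    apply Measurable.indicator _ (measurableSet_shell a b)
    exact ENNReal.measurable_ofReal.comp
      ((continuous_w.comp (continuous_id.sub continuous_const)).measurable)
  have key : ∀ q : EuclideanSpace ℝ (Fin 3),
      Set.indicator {p : E3 | ‖p‖ ^ 2 ∈ Icc a b}
        (fun p => ENNReal.ofReal (w (p - r))) (T q)
      = Set.indicator {p : E3 | ‖p‖ ^ 2 ∈ Icc a b}
        (fun p => ENNReal.ofReal (w (p - EuclideanSpace.single (0 : Fin 3) ‖r‖))) q := by
    intro q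
    have hmem : T q ∈ {p : E3 | ‖p‖ ^ 2 ∈ Icc a b} ↔ q ∈ {p : E3 | ‖p‖ ^ 2 ∈ Icc a b} := by
      simp only [mem_setOf_eq, T.norm_map]
    have hval : w (T q - r) = w (q - EuclideanSpace.single (0 : Fin 3) ‖r‖) := by
      conv_lhs => rw [← hTr]
      rw [← T.map_sub, hwT]
    by_cases hq : q ∈ {p : E3 | ‖p‖ ^ 2 ∈ Icc a b}
    · rw [Set.indicator_of_mem (hmem.mpr hq), Set.indicator_of_mem hq, hval]
    · rw [Set.indicator_of_notMem (fun h => hq (hmem.mp h)), Set.indicator_of_notMem hq]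
  calc ∫⁻ p : E3 in {p : E3 | ‖p‖ ^ 2 ∈ Icc a b}, ENNReal.ofReal (w (p - r))
      = ∫⁻ p : E3, Set.indicator {p : E3 | ‖p‖ ^ 2 ∈ Icc a b}
          (fun p => ENNReal.ofReal (w (p - r))) p :=
        (lintegral_indicator (measurableSet_shell a b) _).symm
    _ = ∫⁻ q : EuclideanSpace ℝ (Fin 3), Set.indicator {p : E3 | ‖p‖ ^ 2 ∈ Icc a b}
          (fun p => ENNReal.ofReal (w (p - r))) (T q) := (hTmp.lintegral_comp hFmeas).symm
    _ = ∫⁻ q : EuclideanSpace ℝ (Fin 3), Set.indicator {p : E3 | ‖p‖ ^ 2 ∈ Icc a b}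
          (fun p => ENNReal.ofReal (w (p - EuclideanSpace.single (0 : Fin 3) ‖r‖))) q :=
        lintegral_congr key
    _ = ∫⁻ q : E3 in {p : E3 | ‖p‖ ^ 2 ∈ Icc a b},
          ENNReal.ofReal (w (q - EuclideanSpace.single (0 : Fin 3) ‖r‖)) :=
        lintegral_indicator (measurableSet_shell a b) _
    _ ≤ ENNReal.ofReal (π ^ 2 * (b - a)) := shell_single ‖r‖ a b hab



lemma main_bound (t : ℝ) (ht : 1 ≤ t) (r : E3) (α : ℝ) (N : ℕ) (htN : t ≤ 2 ^ N) :
    ∫⁻ p : E3, ENNReal.ofReal (w (p - r)) *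
        ENNReal.ofReal ((Real.sqrt ((α - ‖p‖ ^ 2 / 2) ^ 2 + (1 / t) ^ 2))⁻¹)
      ≤ ENNReal.ofReal (((N : ℝ) + 1) * (8 * π ^ 2) + Kw) := by
  have ht0 : (0:ℝ) < t := lt_of_lt_of_le one_pos ht
  have hεpos : (0:ℝ) < 1 / t := by positivity
  set g : ℝ → ℝ := fun s => (Real.sqrt ((α - s) ^ 2 + (1 / t) ^ 2))⁻¹ with hg
  have hgt : ∀ s, g s ≤ t := by
    intro s
    have h1 : (1 / t) ≤ Real.sqrt ((α - s) ^ 2 + (1 / t) ^ 2) := by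
      calc (1/t : ℝ) = Real.sqrt ((1/t) ^ 2) := (Real.sqrt_sq hεpos.le).symm
        _ ≤ _ := Real.sqrt_le_sqrt (by nlinarith [sq_nonneg (α - s)])
    calc g s ≤ (1/t)⁻¹ := inv_anti₀ hεpos h1
      _ = t := by field_simp
  have hgabs : ∀ s : ℝ, ∀ c : ℝ, 0 < c → c ≤ |α - s| → g s ≤ c⁻¹ := by
    intro s c hc hcs
    apply inv_anti₀ hc
    calc c = Real.sqrt (c ^ 2) := (Real.sqrt_sq hc.le).symm
      _ ≤ _ := Real.sqrt_le_sqrt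
          (by nlinarith [_root_.sq_abs (α - s), abs_nonneg (α - s), sq_nonneg (1/t)])
  set A : ℕ → Set E3 := fun j => {p : E3 | |‖p‖ ^ 2 / 2 - α| ≤ 2 ^ j * (1 / t)} with hA
  have hAmeas : ∀ j, MeasurableSet (A j) := by
    intro j
    have hAj : A j = (fun p : E3 => |‖p‖ ^ 2 / 2 - α|) ⁻¹' Iic (2 ^ j * (1 / t)) := rfl
    rw [hAj]
    exact (((continuous_norm.pow 2).div_const 2).sub
      continuous_const).abs.measurable measurableSet_Iic
  have hWmeas : Measurable fun p : E3 => ENNReal.ofReal (w (p - r)) :=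
    ENNReal.measurable_ofReal.comp
      ((continuous_w.comp (continuous_id.sub continuous_const)).measurable)
  have hpt : ∀ p : E3,
      ENNReal.ofReal (w (p - r)) * ENNReal.ofReal (g (‖p‖ ^ 2 / 2))
      ≤ (∑ j ∈ Finset.range (N + 1),
          Set.indicator (A j)
            (fun p => ENNReal.ofReal (2 * t / 2 ^ j) * ENNReal.ofReal (w (p - r))) p)
        + Set.indicator (A N)ᶜ (fun p => ENNReal.ofReal (w (p - r))) p := by
    intro p
    by_cases hpN : p ∈ A N
    · have hex : ∃ j, p ∈ A j := ⟨N, hpN⟩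
      have hj0N : Nat.find hex ≤ N := Nat.find_le hpN
      have hj0mem : p ∈ A (Nat.find hex) := Nat.find_spec hex
      set j0 := Nat.find hex with hj0def
      have hgb : g (‖p‖ ^ 2 / 2) ≤ 2 * t / 2 ^ j0 := by
        rcases Nat.eq_zero_or_pos j0 with h0 | hposj
        · rw [h0, pow_zero, div_one]
          calc g (‖p‖ ^ 2 / 2) ≤ t := hgt _
            _ ≤ 2 * t := by linarith
        · have hnot : p ∉ A (j0 - 1) := by
            apply Nat.find_min hex
            omega
          have hlt : 2 ^ (j0 - 1) * (1 / t) < |‖p‖ ^ 2 / 2 - α| := by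
            by_contra hcon
            push_neg at hcon
            exact hnot hcon
          have hc : (0:ℝ) < 2 ^ (j0 - 1) * (1 / t) := by positivity
          have hgb1 := hgabs (‖p‖ ^ 2 / 2) (2 ^ (j0 - 1) * (1 / t)) hc
            (by rw [abs_sub_comm]; exact hlt.le)
          have h2 : (2:ℝ) ^ j0 = 2 * 2 ^ (j0 - 1) := by
            rw [← pow_succ']
            congr 1
            omega
          calc g (‖p‖ ^ 2 / 2) ≤ (2 ^ (j0 - 1) * (1 / t))⁻¹ := hgb1
            _ = 2 * t / 2 ^ j0 := by
              rw [h2]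
              field_simp
      calc ENNReal.ofReal (w (p - r)) * ENNReal.ofReal (g (‖p‖ ^ 2 / 2))
          ≤ ENNReal.ofReal (w (p - r)) * ENNReal.ofReal (2 * t / 2 ^ j0) :=
            mul_le_mul_right (ENNReal.ofReal_le_ofReal hgb) _
        _ = Set.indicator (A j0)
              (fun p => ENNReal.ofReal (2 * t / 2 ^ j0) * ENNReal.ofReal (w (p - r))) p := by
            rw [Set.indicator_of_mem hj0mem, mul_comm]
        _ ≤ ∑ j ∈ Finset.range (N + 1), Set.indicator (A j)
              (fun p => ENNReal.ofReal (2 * t / 2 ^ j) * ENNReal.ofReal (w (p - r))) p := by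
            apply Finset.single_le_sum (f := fun j => Set.indicator (A j)
              (fun p => ENNReal.ofReal (2 * t / 2 ^ j) * ENNReal.ofReal (w (p - r))) p)
              (fun i _ => zero_le)
            exact Finset.mem_range.mpr (by omega)
        _ ≤ _ := le_self_add
    · have hfar : 2 ^ N * (1 / t) < |‖p‖ ^ 2 / 2 - α| := by
        by_contra hcon
        push_neg at hcon
        exact hpN hcon
      have h1le : (1:ℝ) ≤ 2 ^ N * (1 / t) := by
        rw [mul_one_div]
        exact (one_le_div ht0).mpr htN
      have hgb : g (‖p‖ ^ 2 / 2) ≤ 1 := by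
        have h := hgabs (‖p‖ ^ 2 / 2) 1 one_pos
          (by rw [abs_sub_comm]; linarith)
        simpa using h
      calc ENNReal.ofReal (w (p - r)) * ENNReal.ofReal (g (‖p‖ ^ 2 / 2))
          ≤ ENNReal.ofReal (w (p - r)) * 1 := by
            apply mul_le_mul_right
            calc ENNReal.ofReal (g (‖p‖ ^ 2 / 2)) ≤ ENNReal.ofReal 1 :=
                ENNReal.ofReal_le_ofReal hgb
              _ = 1 := ENNReal.ofReal_one
        _ = Set.indicator (A N)ᶜ (fun p => ENNReal.ofReal (w (p - r))) p := by
            rw [mul_one, Set.indicator_of_mem (show p ∈ (A N)ᶜ from hpN)]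
        _ ≤ _ := le_add_self
  have hterm : ∀ j, ∫⁻ p : E3, Set.indicator (A j)
      (fun p => ENNReal.ofReal (2 * t / 2 ^ j) * ENNReal.ofReal (w (p - r))) p
      ≤ ENNReal.ofReal (8 * π ^ 2) := by
    intro j
    rw [lintegral_indicator (hAmeas j), lintegral_const_mul _ hWmeas]
    have hsub : A j ⊆ {p : E3 | ‖p‖ ^ 2 ∈ Icc (2 * α - 2 * (2 ^ j * (1 / t)))
        (2 * α + 2 * (2 ^ j * (1 / t)))} := by
      intro p hp
      rw [hA, mem_setOf_eq, abs_le] at hp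
      rw [mem_setOf_eq, mem_Icc]
      constructor <;> linarith [hp.1, hp.2]
    calc ENNReal.ofReal (2 * t / 2 ^ j) * ∫⁻ p in A j, ENNReal.ofReal (w (p - r))
        ≤ ENNReal.ofReal (2 * t / 2 ^ j) *
            ∫⁻ p in {p : E3 | ‖p‖ ^ 2 ∈ Icc (2 * α - 2 * (2 ^ j * (1 / t)))
              (2 * α + 2 * (2 ^ j * (1 / t)))}, ENNReal.ofReal (w (p - r)) :=
          mul_le_mul_right (lintegral_mono_set hsub) _
      _ ≤ ENNReal.ofReal (2 * t / 2 ^ j) *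
          ENNReal.ofReal (π ^ 2 * ((2 * α + 2 * (2 ^ j * (1 / t)))
            - (2 * α - 2 * (2 ^ j * (1 / t))))) :=
          mul_le_mul_right (shell r _ _) _
      _ ≤ ENNReal.ofReal (8 * π ^ 2) := by
          rw [← ENNReal.ofReal_mul (by positivity)]
          apply ENNReal.ofReal_le_ofReal
          have heq : 2 * t / 2 ^ j * (π ^ 2 * ((2 * α + 2 * (2 ^ j * (1 / t)))
              - (2 * α - 2 * (2 ^ j * (1 / t))))) = 8 * π ^ 2 := by
            field_simp
            ring
          rw [heq]
  have hfarint : ∫⁻ p : E3, Set.indicator (A N)ᶜ (fun p => ENNReal.ofReal (w (p - r))) p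
      ≤ ENNReal.ofReal Kw := by
    rw [lintegral_indicator (hAmeas N).compl, ← lintegral_w r]
    exact setLIntegral_le_lintegral _ _
  have hsummeas : ∀ j ∈ Finset.range (N + 1), Measurable (fun p : E3 => Set.indicator (A j)
      (fun p => ENNReal.ofReal (2 * t / 2 ^ j) * ENNReal.ofReal (w (p - r))) p) := by
    intro j _
    exact (hWmeas.const_mul _).indicator (hAmeas j)
  calc ∫⁻ p : E3, ENNReal.ofReal (w (p - r)) *
        ENNReal.ofReal ((Real.sqrt ((α - ‖p‖ ^ 2 / 2) ^ 2 + (1 / t) ^ 2))⁻¹)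
      ≤ ∫⁻ p : E3, ((∑ j ∈ Finset.range (N + 1),
          Set.indicator (A j)
            (fun p => ENNReal.ofReal (2 * t / 2 ^ j) * ENNReal.ofReal (w (p - r))) p)
        + Set.indicator (A N)ᶜ (fun p => ENNReal.ofReal (w (p - r))) p) :=
        lintegral_mono hpt
    _ = (∫⁻ p : E3, ∑ j ∈ Finset.range (N + 1),
          Set.indicator (A j)
            (fun p => ENNReal.ofReal (2 * t / 2 ^ j) * ENNReal.ofReal (w (p - r))) p)
        + ∫⁻ p : E3, Set.indicator (A N)ᶜ (fun p => ENNReal.ofReal (w (p - r))) p := by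
        rw [lintegral_add_left]
        exact Finset.measurable_sum _ hsummeas
    _ = (∑ j ∈ Finset.range (N + 1), ∫⁻ p : E3,
          Set.indicator (A j)
            (fun p => ENNReal.ofReal (2 * t / 2 ^ j) * ENNReal.ofReal (w (p - r))) p)
        + ∫⁻ p : E3, Set.indicator (A N)ᶜ (fun p => ENNReal.ofReal (w (p - r))) p := by
        rw [lintegral_finset_sum _ hsummeas]
    _ ≤ (∑ _j ∈ Finset.range (N + 1), ENNReal.ofReal (8 * π ^ 2)) + ENNReal.ofReal Kw :=
        add_le_add (Finset.sum_le_sum fun j _ => hterm j) hfarint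
    _ = (N + 1) • ENNReal.ofReal (8 * π ^ 2) + ENNReal.ofReal Kw := by
        rw [Finset.sum_const, Finset.card_range]
    _ = ENNReal.ofReal (((N : ℝ) + 1) * (8 * π ^ 2) + Kw) := by
        have h1 : (N + 1) • ENNReal.ofReal (8 * π ^ 2)
            = ENNReal.ofReal (((N : ℝ) + 1) * (8 * π ^ 2)) := by
          rw [nsmul_eq_mul, ← ENNReal.ofReal_natCast (N + 1),
            ← ENNReal.ofReal_mul (by positivity)]
          congr 1
          push_cast
          ring
        rw [h1, ← ENNReal.ofReal_add (by positivity) Kw_nonneg]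

end ResolventAux

/-- Translated resolvent integral estimate (Proposition 2.2, fourth bound):
there is `C > 0` such that for all `t ≥ 1`, `r ∈ ℝ³`, `α ∈ ℝ`,
`∫_{ℝ³} dp / (⟨p - r⟩⁴ · |α - |p|²/2 + i/t|) ≤ C log♯ t`. -/
theorem translated_resolvent_integral_estimate :
    ∃ C > 0, ∀ t : ℝ, 1 ≤ t → ∀ r : E3, ∀ α : ℝ,
      (∫ p : E3, 1 / (japV (p - r) ^ 4 *
        ‖(α : ℂ) - ((‖p‖ ^ 2 / 2 : ℝ) : ℂ) + Complex.I * ((1 / t : ℝ) : ℂ)‖)) ≤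
      C * logSharp t := by
  classical
  refine ⟨5 * (12 * Real.pi ^ 2 + ResolventAux.Kw + 1), by
    nlinarith [ResolventAux.Kw_nonneg, Real.pi_pos, sq_nonneg Real.pi], ?_⟩
  intro t ht r α
  have ht0 : (0:ℝ) < t := lt_of_lt_of_le one_pos ht
  set N : ℕ := ⌈Real.logb 2 t⌉₊ with hNdef
  have htN : t ≤ 2 ^ N := by
    have h1 : Real.logb 2 t ≤ (N : ℝ) := Nat.le_ceil _
    have h2 := (Real.logb_le_iff_le_rpow one_lt_two ht0).mp h1
    rwa [Real.rpow_natCast] at h2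
  have hlsh1 : 1 ≤ logSharp t := by
    rw [logSharp]
    split_ifs with h
    · exact le_rfl
    · push_neg at h
      have hlog := (Real.lt_log_iff_exp_lt ht0).mpr h
      linarith
  have hN5 : (N : ℝ) + 1 ≤ 5 * logSharp t := by
    have hlog2 : (0.6931471803 : ℝ) < Real.log 2 := Real.log_two_gt_d9
    rw [logSharp]
    split_ifs with h
    · have hlb : Real.logb 2 t ≤ 2 := by
        rw [Real.logb, div_le_iff₀ (by linarith)]
        have h1 : Real.log t ≤ 1 := by
          calc Real.log t ≤ Real.log (Real.exp 1) := (Real.log_le_log_iff ht0 (Real.exp_pos 1)).mpr h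
            _ = 1 := Real.log_exp 1
        nlinarith
      have hNle : N ≤ 2 := Nat.ceil_le.mpr hlb
      have : (N : ℝ) ≤ 2 := by exact_mod_cast hNle
      linarith
    · push_neg at h
      have hlog1 : 1 < Real.log t := (Real.lt_log_iff_exp_lt ht0).mpr h
      have hlbnn : 0 ≤ Real.logb 2 t := Real.logb_nonneg one_lt_two ht
      have hceil : (N : ℝ) < Real.logb 2 t + 1 := Nat.ceil_lt_add_one hlbnn
      have hlb2 : Real.logb 2 t ≤ 2 * Real.log t := by
        rw [Real.logb, div_le_iff₀ (by linarith)]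
        nlinarith [Real.log_nonneg ht]
      linarith
  -- rewrite integrand
  have hptEq : ∀ p : E3, 1 / (japV (p - r) ^ 4 *
      ‖(α : ℂ) - ((‖p‖ ^ 2 / 2 : ℝ) : ℂ) + Complex.I * ((1 / t : ℝ) : ℂ)‖)
      = ResolventAux.w (p - r) * (Real.sqrt ((α - ‖p‖ ^ 2 / 2) ^ 2 + (1 / t) ^ 2))⁻¹ := by
    intro p
    have hjap : japV (p - r) ^ 4 = (1 + ‖p - r‖ ^ 2) ^ 2 := by
      rw [japV, show (4:ℕ) = 2 * 2 from rfl, pow_mul, Real.sq_sqrt (by positivity)]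
    have habs : ‖(α : ℂ) - ((‖p‖ ^ 2 / 2 : ℝ) : ℂ) + Complex.I * ((1 / t : ℝ) : ℂ)‖
        = Real.sqrt ((α - ‖p‖ ^ 2 / 2) ^ 2 + (1 / t) ^ 2) := by
      rw [Complex.norm_def, Complex.normSq_apply]
      simp only [Complex.add_re, Complex.sub_re, Complex.ofReal_re, Complex.mul_re,
        Complex.I_re, Complex.I_im, Complex.ofReal_im, Complex.add_im, Complex.sub_im,
        Complex.mul_im]
      congr 1
      ring
    rw [hjap, habs, one_div, mul_inv, ResolventAux.w]
  have hgcont : Continuous fun s : ℝ => (Real.sqrt ((α - s) ^ 2 + (1 / t) ^ 2))⁻¹ := by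
    apply Continuous.inv₀
    · exact Real.continuous_sqrt.comp
        (((continuous_const.sub continuous_id).pow 2).add continuous_const)
    · intro s
      apply ne_of_gt
      apply Real.sqrt_pos.mpr
      have h1 : (0:ℝ) < (1 / t) ^ 2 := pow_pos (by positivity) 2
      nlinarith [sq_nonneg (α - s)]
  have hWGcont : Continuous fun p : E3 => ResolventAux.w (p - r) *
      (Real.sqrt ((α - ‖p‖ ^ 2 / 2) ^ 2 + (1 / t) ^ 2))⁻¹ :=
    (ResolventAux.continuous_w.comp (continuous_id.sub continuous_const)).mul
      (hgcont.comp ((continuous_norm.pow 2).div_const 2))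
  have hInt : (∫ p : E3, 1 / (japV (p - r) ^ 4 *
      ‖(α : ℂ) - ((‖p‖ ^ 2 / 2 : ℝ) : ℂ) + Complex.I * ((1 / t : ℝ) : ℂ)‖))
      = ∫ p : E3, ResolventAux.w (p - r) *
        (Real.sqrt ((α - ‖p‖ ^ 2 / 2) ^ 2 + (1 / t) ^ 2))⁻¹ := by
    congr 1
    funext p
    exact hptEq p
  rw [hInt]
  have hnn : ∀ p : E3, 0 ≤ ResolventAux.w (p - r) *
      (Real.sqrt ((α - ‖p‖ ^ 2 / 2) ^ 2 + (1 / t) ^ 2))⁻¹ := by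
    intro p
    apply mul_nonneg (ResolventAux.w_nonneg _)
    positivity
  rw [MeasureTheory.integral_eq_lintegral_of_nonneg_ae (Filter.Eventually.of_forall hnn)
    hWGcont.aestronglyMeasurable]
  have hCpos : (0:ℝ) ≤ 5 * (12 * Real.pi ^ 2 + ResolventAux.Kw + 1) * logSharp t := by
    nlinarith [ResolventAux.Kw_nonneg, Real.pi_pos, sq_nonneg Real.pi, hlsh1]
  apply ENNReal.toReal_le_of_le_ofReal hCpos
  calc ∫⁻ p : E3, ENNReal.ofReal (ResolventAux.w (p - r) *
        (Real.sqrt ((α - ‖p‖ ^ 2 / 2) ^ 2 + (1 / t) ^ 2))⁻¹)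
      = ∫⁻ p : E3, ENNReal.ofReal (ResolventAux.w (p - r)) *
        ENNReal.ofReal ((Real.sqrt ((α - ‖p‖ ^ 2 / 2) ^ 2 + (1 / t) ^ 2))⁻¹) := by
        apply lintegral_congr
        intro p
        rw [ENNReal.ofReal_mul (ResolventAux.w_nonneg _)]
    _ ≤ ENNReal.ofReal (((N : ℝ) + 1) * (8 * Real.pi ^ 2) + ResolventAux.Kw) :=
        ResolventAux.main_bound t ht r α N htN
    _ ≤ ENNReal.ofReal (5 * (12 * Real.pi ^ 2 + ResolventAux.Kw + 1) * logSharp t) := by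
        apply ENNReal.ofReal_le_ofReal
        nlinarith [mul_le_mul_of_nonneg_right hN5
            (by positivity : (0:ℝ) ≤ 8 * Real.pi ^ 2),
          ResolventAux.Kw_nonneg, hlsh1, sq_nonneg Real.pi,
          mul_le_mul_of_nonneg_left hlsh1 ResolventAux.Kw_nonneg]
end
end

section
/- (Semigroup property of the free kernel, Proposition 2.4.) Let m ≥ 1 and let I₁, I₂ be nonempty disjoint subsets of {0, 1, …, m} with I₁ ∪ I₂ = {0, …, m}. Then for every t > 0 and all p₀, …, p_m ∈ ℝ³ one has K(t; p₀, …, p_m) = −i ∫₀ᵗ K(s; (p_j)_{j ∈ I₁}) · K(t − s; (p_j)_{j ∈ I₂}) ds, where K(·; (p_j)_{j ∈ I}) denotes the free evolution kernel evaluated at the momenta indexed by I, listed in increasing order of index (K is symmetric under permutations of its momentum arguments). -/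
noncomputable section

open MeasureTheory Complex

/-- Integration of a function over the simplex `{(s₀,…,s_b) : s_j ≥ 0, s₀+⋯+s_b = t}`,
parametrized by `(s₀,…,s_{b-1}) ∈ [0,∞)^b` with `s_b := t - (s₀+⋯+s_{b-1}) ≥ 0`. -/
def simplexInt (b : ℕ) (t : ℝ) (F : (Fin (b + 1) → ℝ) → ℂ) : ℂ :=
  ∫ s : Fin b → ℝ,
    Set.indicator {s : Fin b → ℝ | (∀ j, 0 ≤ s j) ∧ (∑ j, s j) ≤ t}
      (fun s => F (Fin.snoc s (t - ∑ j, s j))) s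

/-- The free evolution kernel `K(t; p₀, …, p_m)`. -/
def freeKernel (m : ℕ) (t : ℝ) (p : Fin (m + 1) → E3) : ℂ :=
  (-Complex.I) ^ m *
    simplexInt m t (fun s =>
      Complex.exp (-Complex.I * ∑ j : Fin (m + 1), (s j : ℂ) * ((‖p j‖ ^ 2 / 2 : ℝ) : ℂ)))

namespace FKaux

/-! ### One-sided convolution and the class of nice functions -/

def conv (f g : ℝ → ℂ) (t : ℝ) : ℂ := ∫ x : ℝ, f x * g (t - x)

structure Nice (f : ℝ → ℂ) : Prop where
  meas : Measurable f
  zero : ∀ x < (0:ℝ), f x = 0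
  bdd : ∀ T : ℝ, ∃ C : ℝ, 0 ≤ C ∧ ∀ x ∈ Set.Icc (0:ℝ) T, ‖f x‖ ≤ C

def g1 (a : ℝ) (x : ℝ) : ℂ := if 0 ≤ x then Complex.exp (-Complex.I * ((x : ℂ) * (a : ℂ))) else 0

lemma norm_exp_real_mul_I' (r : ℝ) : ‖Complex.exp (-Complex.I * (r:ℂ))‖ = 1 := by
  rw [Complex.norm_exp]
  simp

lemma nice_norm_le {f : ℝ → ℂ} (hf : Nice f) {T : ℝ} : ∃ C : ℝ, 0 ≤ C ∧ ∀ x ≤ T, ‖f x‖ ≤ C := by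
  obtain ⟨C, hC0, hC⟩ := hf.bdd T
  refine ⟨C, hC0, fun x hx => ?_⟩
  rcases lt_or_ge x 0 with h | h
  · simp [hf.zero x h, hC0]
  · exact hC x ⟨h, hx⟩

lemma g1_nice (a : ℝ) : Nice (g1 a) := by
  refine ⟨?_, ?_, ?_⟩
  · unfold g1
    exact Measurable.ite measurableSet_Ici ((Complex.measurable_exp).comp (by fun_prop)) measurable_const
  · intro x hx; simp [g1, not_le.2 hx]
  · intro T
    refine ⟨1, zero_le_one, ?_⟩
    intro x hx
    simp only [g1, hx.1, if_true]
    rw [show ((x:ℂ) * (a:ℂ)) = ((x*a : ℝ) : ℂ) by push_cast; ring]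
    exact le_of_eq (norm_exp_real_mul_I' _)

lemma conv_comm (f g : ℝ → ℂ) : conv f g = conv g f := by
  funext t
  unfold conv
  rw [← integral_sub_left_eq_self (fun x => f x * g (t - x)) volume t]
  simp only [sub_sub_cancel]
  simp_rw [mul_comm]

lemma conv_meas {f g : ℝ → ℂ} (hf : Nice f) (hg : Nice g) : Measurable (conv f g) := by
  have h1 : StronglyMeasurable (Function.uncurry (fun t x => f x * g (t - x))) := by
    apply Measurable.stronglyMeasurable
    apply Measurable.mul
    · exact hf.meas.comp measurable_snd
    · exact hg.meas.comp (measurable_fst.sub measurable_snd)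
  exact (h1.integral_prod_right).measurable

lemma conv_zero_of_neg {f g : ℝ → ℂ} (hf : Nice f) (hg : Nice g) {t : ℝ} (ht : t < 0) :
    conv f g t = 0 := by
  unfold conv
  rw [integral_eq_zero_of_ae]
  filter_upwards with x
  simp only [Pi.zero_apply]
  rcases lt_or_ge x 0 with h | h
  · simp [hf.zero x h]
  · rw [hg.zero _ (by linarith), mul_zero]

lemma conv_nice {f g : ℝ → ℂ} (hf : Nice f) (hg : Nice g) : Nice (conv f g) := by
  refine ⟨conv_meas hf hg, fun t ht => conv_zero_of_neg hf hg ht, ?_⟩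
  intro T
  obtain ⟨Cf, hCf0, hCf⟩ := hf.bdd T
  obtain ⟨Cg, hCg0, hCg⟩ := hg.bdd T
  refine ⟨Cf * Cg * (volume (Set.Icc (0:ℝ) T)).toReal, by positivity, ?_⟩
  intro t ht
  calc ‖conv f g t‖ ≤ ∫ x, ‖f x * g (t - x)‖ := norm_integral_le_integral_norm _
    _ ≤ ∫ x, Set.indicator (Set.Icc (0:ℝ) T) (fun _ => Cf * Cg) x := by
        apply integral_mono_of_nonneg
        · filter_upwards with x; positivity
        · exact (integrable_indicator_iff measurableSet_Icc).2
            (integrableOn_const (by rw [Real.volume_Icc]; exact ENNReal.ofReal_ne_top))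
        · filter_upwards with x
          by_cases hx : x ∈ Set.Icc (0:ℝ) t
          · rw [Set.indicator_of_mem (Set.Icc_subset_Icc_right ht.2 hx)]
            rw [norm_mul]
            have h1 : ‖f x‖ ≤ Cf := hCf x (Set.Icc_subset_Icc_right ht.2 hx)
            have h2 : ‖g (t - x)‖ ≤ Cg := hCg (t - x) ⟨by simp at hx ⊢; linarith [hx.2], by
              simp at hx ⊢; linarith [hx.1, ht.2]⟩
            exact mul_le_mul h1 h2 (norm_nonneg _) hCf0
          · have : f x * g (t - x) = 0 := by
              simp only [Set.mem_Icc, not_and_or, not_le] at hx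
              rcases hx with h | h
              · rw [hf.zero x h, zero_mul]
              · rw [hg.zero _ (by linarith), mul_zero]
            rw [this, norm_zero]
            exact Set.indicator_nonneg (fun _ _ => by positivity) x
    _ = Cf * Cg * (volume (Set.Icc (0:ℝ) T)).toReal := by
        rw [integral_indicator_const _ measurableSet_Icc, smul_eq_mul, measureReal_def]
        ring

lemma integrable_triple {f g h : ℝ → ℂ} (hf : Nice f) (hg : Nice g) (hh : Nice h) (t : ℝ) :
    Integrable (fun p : ℝ × ℝ => f p.2 * g (p.1 - p.2) * h (t - p.1)) volume := by
  set T := max t 0 with hT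
  obtain ⟨Cf, hCf0, hCf⟩ := nice_norm_le hf (T := T)
  obtain ⟨Cg, hCg0, hCg⟩ := nice_norm_le hg (T := T)
  obtain ⟨Ch, hCh0, hCh⟩ := nice_norm_le hh (T := T)
  have hmeas : AEStronglyMeasurable (fun p : ℝ × ℝ => f p.2 * g (p.1 - p.2) * h (t - p.1)) volume := by
    apply Measurable.aestronglyMeasurable
    exact ((hf.meas.comp measurable_snd).mul
      (hg.meas.comp (measurable_fst.sub measurable_snd))).mul
      (hh.meas.comp (measurable_const.sub measurable_fst))
  apply Integrable.mono' (g := Set.indicator (Set.Icc (0:ℝ) T ×ˢ Set.Icc (0:ℝ) T)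
    (fun _ => Cf * Cg * Ch)) ?_ hmeas
  · filter_upwards with p
    by_cases hp : 0 ≤ p.2 ∧ p.2 ≤ p.1 ∧ p.1 ≤ t
    · obtain ⟨h1, h2, h3⟩ := hp
      have hmem : p ∈ Set.Icc (0:ℝ) T ×ˢ Set.Icc (0:ℝ) T := by
        refine ⟨⟨by linarith, ?_⟩, ⟨h1, ?_⟩⟩ <;> simp [hT] <;> exact Or.inl (by linarith)
      rw [Set.indicator_of_mem hmem]
      have b1 : ‖f p.2‖ ≤ Cf := hCf _ (by simp [hT]; left; linarith)
      have b2 : ‖g (p.1 - p.2)‖ ≤ Cg := hCg _ (by simp [hT]; left; linarith)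
      have b3 : ‖h (t - p.1)‖ ≤ Ch := hCh _ (by simp [hT]; left; linarith)
      calc ‖f p.2 * g (p.1 - p.2) * h (t - p.1)‖ = ‖f p.2‖ * ‖g (p.1 - p.2)‖ * ‖h (t - p.1)‖ := by
            rw [norm_mul, norm_mul]
        _ ≤ Cf * Cg * Ch := by
            apply mul_le_mul (mul_le_mul b1 b2 (norm_nonneg _) hCf0) b3 (norm_nonneg _) (by positivity)
    · push_neg at hp
      have hz : f p.2 * g (p.1 - p.2) * h (t - p.1) = 0 := by
        rcases lt_or_ge p.2 0 with h1 | h1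
        · rw [hf.zero _ h1, zero_mul, zero_mul]
        rcases lt_or_ge p.1 p.2 with h2 | h2
        · rw [hg.zero _ (by linarith), mul_zero, zero_mul]
        · rw [hh.zero _ (by linarith [hp h1 h2]), mul_zero]
      rw [hz, norm_zero]
      exact Set.indicator_nonneg (fun _ _ => by positivity) p
  · apply (integrable_indicator_iff (measurableSet_Icc.prod measurableSet_Icc)).2
    refine integrableOn_const ?_
    rw [Measure.volume_eq_prod, Measure.prod_prod, Real.volume_Icc]
    exact ENNReal.mul_ne_top ENNReal.ofReal_ne_top ENNReal.ofReal_ne_top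

lemma conv_assoc {f g h : ℝ → ℂ} (hf : Nice f) (hg : Nice g) (hh : Nice h) :
    conv (conv f g) h = conv f (conv g h) := by
  funext t
  unfold conv
  have key : ∫ x, (∫ y, f y * g (x - y)) * h (t - x)
      = ∫ x, ∫ y, f y * g (x - y) * h (t - x) := by
    congr 1; funext x; rw [← integral_mul_const]
  rw [key, integral_integral_swap (integrable_triple hf hg hh t)]
  congr 1; funext y
  have : ∀ x, f y * g (x - y) * h (t - x) = f y * (g (x - y) * h (t - x)) := fun x => by ring
  simp_rw [this]
  rw [integral_const_mul]
  congr 1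
  have hsub := integral_add_right_eq_self (μ := volume) (fun x => g (x - y) * h (t - x)) y
  rw [← hsub]
  congr 1; funext x
  rw [add_sub_cancel_right]
  congr 2
  ring

/-! ### Iterated convolutions indexed by lists -/

def F : ℝ → List ℝ → ℝ → ℂ
  | a, [] => g1 a
  | a, b :: l => conv (g1 a) (F b l)

def FF : List ℝ → ℝ → ℂ
  | [] => 0
  | a :: l => F a l

lemma F_nice : ∀ (l : List ℝ) (a : ℝ), Nice (F a l)
  | [], a => g1_nice a
  | b :: l, a => conv_nice (g1_nice a) (F_nice l b)

lemma FF_nice {l : List ℝ} (hl : l ≠ []) : Nice (FF l) := by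
  cases l with
  | nil => exact absurd rfl hl
  | cons a l => exact F_nice l a

lemma F_eq_conv_FF {l : List ℝ} (hl : l ≠ []) (a : ℝ) : F a l = conv (g1 a) (FF l) := by
  cases l with
  | nil => exact absurd rfl hl
  | cons b l => rfl

lemma conv_left_comm {f g h : ℝ → ℂ} (hf : Nice f) (hg : Nice g) (hh : Nice h) :
    conv f (conv g h) = conv g (conv f h) := by
  rw [← conv_assoc hf hg hh, conv_comm f g, conv_assoc hg hf hh]

lemma headswap : ∀ (l : List ℝ) (x y : ℝ), conv (g1 y) (F x l) = conv (g1 x) (F y l)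
  | [], x, y => by simp only [F]; rw [conv_comm]
  | b :: l, x, y => by
      simp only [F]
      exact conv_left_comm (g1_nice y) (g1_nice x) (F_nice l b)

lemma FF_perm {l₁ l₂ : List ℝ} (h : l₁.Perm l₂) : FF l₁ = FF l₂ := by
  induction h with
  | nil => rfl
  | cons x h ih =>
      rename_i l₁' l₂'
      cases l₁' with
      | nil => rw [h.symm.eq_nil]
      | cons b r =>
          cases l₂' with
          | nil => exact absurd h.eq_nil (by simp)
          | cons c r' =>
              show F x (b :: r) = F x (c :: r')
              rw [F_eq_conv_FF (by simp) x, F_eq_conv_FF (by simp) x]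
              rw [show FF (b :: r) = FF (c :: r') from ih]
  | swap x y l =>
      show F y (x :: l) = F x (y :: l)
      simp only [F]
      exact headswap l x y
  | trans _ _ ih₁ ih₂ => rw [ih₁, ih₂]

lemma F_append : ∀ (l₁ : List ℝ) (a b : ℝ) (l₂ : List ℝ),
    F a (l₁ ++ b :: l₂) = conv (F a l₁) (F b l₂)
  | [], a, b, l₂ => rfl
  | c :: l₁, a, b, l₂ => by
      show conv (g1 a) (F c (l₁ ++ b :: l₂)) = conv (conv (g1 a) (F c l₁)) (F b l₂)
      rw [F_append l₁ c b l₂, conv_assoc (g1_nice a) (F_nice l₁ c) (F_nice l₂ b)]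

lemma FF_append {l₁ l₂ : List ℝ} (h₁ : l₁ ≠ []) (h₂ : l₂ ≠ []) :
    FF (l₁ ++ l₂) = conv (FF l₁) (FF l₂) := by
  cases l₁ with
  | nil => exact absurd rfl h₁
  | cons x r₁ =>
      cases l₂ with
      | nil => exact absurd rfl h₂
      | cons y r₂ =>
          show F x (r₁ ++ y :: r₂) = conv (F x r₁) (F y r₂)
          exact F_append r₁ x y r₂

/-! ### The kernel as an iterated convolution -/

/-- The simplex set. -/
def SS (b : ℕ) (t : ℝ) : Set (Fin b → ℝ) := {s | (∀ j, 0 ≤ s j) ∧ (∑ j, s j) ≤ t}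

lemma measurableSet_SS (b : ℕ) (t : ℝ) : MeasurableSet (SS b t) := by
  have : SS b t = (⋂ j, {s : Fin b → ℝ | 0 ≤ s j}) ∩ {s | ∑ j, s j ≤ t} := by
    ext s; simp [SS, Set.mem_iInter]
  rw [this]
  exact (MeasurableSet.iInter fun j =>
      measurableSet_le measurable_const (measurable_pi_apply j)).inter
    (measurableSet_le (Finset.measurable_sum _ fun j _ => measurable_pi_apply j) measurable_const)

lemma volume_SS_lt_top (b : ℕ) (t : ℝ) : volume (SS b t) < ⊤ := by
  have hsub : SS b t ⊆ Set.univ.pi (fun _ : Fin b => Set.Icc (0:ℝ) (max t 0)) := by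
    intro s hs
    intro j _
    refine ⟨hs.1 j, ?_⟩
    have : s j ≤ ∑ i, s i := Finset.single_le_sum (fun i _ => hs.1 i) (Finset.mem_univ j)
    exact le_trans this (le_trans hs.2 (le_max_left _ _))
  calc volume (SS b t) ≤ volume (Set.univ.pi (fun _ : Fin b => Set.Icc (0:ℝ) (max t 0))) :=
        measure_mono hsub
    _ = ∏ _i : Fin b, volume (Set.Icc (0:ℝ) (max t 0)) := volume_pi_pi _
    _ < ⊤ := by
        rw [Real.volume_Icc]
        exact ENNReal.prod_lt_top (fun _ _ => ENNReal.ofReal_lt_top)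

lemma integrable_indicator_SS {b : ℕ} {t : ℝ} {G : (Fin b → ℝ) → ℂ}
    (hG : Measurable G) (hGnorm : ∀ s, ‖G s‖ ≤ 1) :
    Integrable (Set.indicator (SS b t) G) := by
  apply Integrable.mono' (g := Set.indicator (SS b t) (fun _ => (1:ℝ)))
  · exact (integrable_indicator_iff (measurableSet_SS b t)).2
      (integrableOn_const (volume_SS_lt_top b t).ne)
  · exact (hG.indicator (measurableSet_SS b t)).aestronglyMeasurable
  · filter_upwards with s
    by_cases hs : s ∈ SS b t
    · rw [Set.indicator_of_mem hs, Set.indicator_of_mem hs]; exact hGnorm s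
    · rw [Set.indicator_of_notMem hs, Set.indicator_of_notMem hs]; simp

/-- The sum appearing in the kernel, with snoc eliminated. -/
lemma sum_snoc_mul (b : ℕ) (w : Fin b → ℝ) (c : ℝ) (a : Fin (b+1) → ℝ) :
    ∑ j : Fin (b+1), (((Fin.snoc w c : Fin b.succ → ℝ) j : ℝ) : ℂ) * ((a j : ℝ) : ℂ)
      = ∑ j : Fin b, ((w j : ℝ) : ℂ) * ((a j.castSucc : ℝ) : ℂ)
        + ((c : ℝ) : ℂ) * ((a (Fin.last b) : ℝ) : ℂ) := by
  rw [Fin.sum_univ_castSucc]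
  simp

def ker (m : ℕ) (a : Fin (m+1) → ℝ) (t : ℝ) : ℂ :=
  simplexInt m t (fun s => Complex.exp (-Complex.I * ∑ j, ((s j : ℝ) : ℂ) * ((a j : ℝ) : ℂ)))

lemma ker_def' (m : ℕ) (a : Fin (m+1) → ℝ) (t : ℝ) :
    ker m a t = ∫ s : Fin m → ℝ, Set.indicator (SS m t)
      (fun s => Complex.exp (-Complex.I *
        (∑ j : Fin m, ((s j : ℝ) : ℂ) * ((a j.castSucc : ℝ) : ℂ)
          + (((t - ∑ j, s j : ℝ) : ℝ) : ℂ) * ((a (Fin.last m) : ℝ) : ℂ)))) s := by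
  unfold ker simplexInt
  congr 1
  funext s
  unfold SS
  congr 1
  funext s
  show Complex.exp _ = _
  rw [sum_snoc_mul]

lemma mem_SS_cons {m : ℕ} {t x : ℝ} {y : Fin m → ℝ} :
    Fin.cons x y ∈ SS (m+1) t ↔ 0 ≤ x ∧ y ∈ SS m (t - x) := by
  simp only [SS, Set.mem_setOf_eq, Fin.forall_fin_succ, Fin.cons_zero, Fin.cons_succ,
    Fin.sum_cons]
  constructor
  · rintro ⟨⟨h0, hy⟩, hsum⟩
    exact ⟨h0, hy, by linarith⟩
  · rintro ⟨h0, hy, hsum⟩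
    exact ⟨⟨h0, hy⟩, by linarith⟩

lemma ker_zero (a : Fin 1 → ℝ) : ker 0 a = g1 (a 0) := by
  funext t
  rw [ker_def']
  rw [show (volume : Measure (Fin 0 → ℝ)) = Measure.dirac (fun a => isEmptyElim a) from by
    rw [volume_pi]; exact Measure.pi_of_empty _]
  rw [integral_dirac]
  by_cases ht : 0 ≤ t
  · rw [Set.indicator_of_mem (by simp [SS, ht])]
    simp [g1, ht, Fin.last]
  · rw [Set.indicator_of_notMem (by simp [SS, ht]), g1, if_neg ht]

lemma ker_succ (m : ℕ) (a : Fin (m+2) → ℝ) :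
    ker (m+1) a = conv (g1 (a 0)) (ker m (fun j => a j.succ)) := by
  funext t
  rw [ker_def']
  set G : (Fin (m+1) → ℝ) → ℂ := fun s => Complex.exp (-Complex.I *
      (∑ j : Fin (m+1), ((s j : ℝ) : ℂ) * ((a j.castSucc : ℝ) : ℂ)
        + (((t - ∑ j, s j : ℝ) : ℝ) : ℂ) * ((a (Fin.last (m+1)) : ℝ) : ℂ))) with hG
  have hGmeas : Measurable G := by
    apply Complex.measurable_exp.comp
    apply Measurable.const_mul
    apply Measurable.add
    · exact Finset.measurable_sum _ fun j _ =>
        (Complex.measurable_ofReal.comp (measurable_pi_apply j)).mul_const _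
    · exact (Complex.measurable_ofReal.comp
        (measurable_const.sub (Finset.measurable_sum _ fun j _ => measurable_pi_apply j))).mul_const _
  have hGnorm : ∀ s, ‖G s‖ ≤ 1 := by
    intro s
    simp only [hG]
    have : (∑ j : Fin (m+1), ((s j : ℝ) : ℂ) * ((a j.castSucc : ℝ) : ℂ)
        + (((t - ∑ j, s j : ℝ) : ℝ) : ℂ) * ((a (Fin.last (m+1)) : ℝ) : ℂ))
        = (((∑ j : Fin (m+1), s j * a j.castSucc
            + (t - ∑ j, s j) * a (Fin.last (m+1))) : ℝ) : ℂ) := by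
      push_cast; ring
    rw [this]
    exact (norm_exp_real_mul_I' _).le
  have hint : Integrable (Set.indicator (SS (m+1) t) G) := integrable_indicator_SS hGmeas hGnorm
  set a' : Fin (m+1) → ℝ := fun j => a j.succ with ha'
  set H : ℝ → (Fin m → ℝ) → ℂ := fun u => fun y => Complex.exp (-Complex.I *
      (∑ j : Fin m, ((y j : ℝ) : ℂ) * ((a' j.castSucc : ℝ) : ℂ)
        + (((u - ∑ j, y j : ℝ) : ℝ) : ℂ) * ((a' (Fin.last m) : ℝ) : ℂ))) with hH
  have hker' : ∀ u : ℝ, ker m a' u = ∫ y : Fin m → ℝ, Set.indicator (SS m u) (H u) y :=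
    fun u => ker_def' m a' u
  set e := MeasurableEquiv.piFinSuccAbove (fun _ : Fin (m+1) => ℝ) 0 with he
  have hsymm : ∀ (x : ℝ) (y : Fin m → ℝ), e.symm (x, y) = Fin.cons x y := by
    intro x y
    simp [he, MeasurableEquiv.piFinSuccAbove, Fin.consEquiv]
  have mp := (measurePreserving_piFinSuccAbove (fun _ : Fin (m+1) => (volume : Measure ℝ)) 0).symm e
  have hvol1 : (volume : Measure (Fin (m+1) → ℝ)) = Measure.pi fun _ => volume := volume_pi
  have hvolm : (Measure.pi fun _ : Fin m => (volume : Measure ℝ)) = volume := volume_pi.symm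
  have hstep : ∫ s : Fin (m+1) → ℝ, Set.indicator (SS (m+1) t) G s
      = ∫ p : ℝ × (Fin m → ℝ), Set.indicator (SS (m+1) t) G (e.symm p)
          ∂((volume : Measure ℝ).prod (volume : Measure (Fin m → ℝ))) := by
    rw [hvol1, ← hvolm]
    exact (mp.integral_comp e.symm.measurableEmbedding (Set.indicator (SS (m+1) t) G)).symm
  rw [hstep]
  have hint2 : Integrable (fun p : ℝ × (Fin m → ℝ) => Set.indicator (SS (m+1) t) G (e.symm p))
      ((volume : Measure ℝ).prod (volume : Measure (Fin m → ℝ))) := by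
    have h3 := (mp.integrable_comp_emb e.symm.measurableEmbedding
      (g := Set.indicator (SS (m+1) t) G)).2 (by rwa [hvol1] at hint)
    rwa [hvolm] at h3
  rw [integral_prod _ hint2]
  have hpoint : ∀ (x : ℝ) (y : Fin m → ℝ),
      Set.indicator (SS (m+1) t) G (Fin.cons x y)
        = g1 (a 0) x * Set.indicator (SS m (t - x)) (H (t - x)) y := by
    intro x y
    by_cases hx : 0 ≤ x
    · by_cases hy : y ∈ SS m (t - x)
      · rw [Set.indicator_of_mem (mem_SS_cons.2 ⟨hx, hy⟩), Set.indicator_of_mem hy]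
        simp only [hG, hH, ha', g1, if_pos hx]
        rw [← Complex.exp_add]
        congr 1
        rw [Fin.sum_univ_succ]
        simp only [Fin.cons_zero, Fin.cons_succ, Fin.castSucc_zero, Fin.succ_castSucc,
          Fin.succ_last, Fin.sum_cons]
        push_cast
        ring
      · rw [Set.indicator_of_notMem hy, Set.indicator_of_notMem, mul_zero]
        intro hmem; exact hy (mem_SS_cons.1 hmem).2
    · rw [Set.indicator_of_notMem, g1, if_neg hx, zero_mul]
      intro hmem; exact hx (mem_SS_cons.1 hmem).1
  calc ∫ x : ℝ, ∫ y : Fin m → ℝ, Set.indicator (SS (m+1) t) G (e.symm (x, y))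
      = ∫ x : ℝ, g1 (a 0) x * ker m a' (t - x) := by
        congr 1; funext x
        simp_rw [hsymm, hpoint]
        rw [integral_const_mul, ← hker' (t - x)]
    _ = conv (g1 (a 0)) (ker m a') t := rfl

lemma ker_eq_FF : ∀ (m : ℕ) (a : Fin (m+1) → ℝ), ker m a = FF (List.ofFn a)
  | 0, a => by
      rw [ker_zero, show List.ofFn a = [a 0] from by simp [List.ofFn_succ]]
      rfl
  | (m+1), a => by
      have hne : List.ofFn (fun i : Fin (m+1) => a i.succ) ≠ [] := by
        intro h
        have := List.length_ofFn (f := fun i : Fin (m+1) => a i.succ)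
        rw [h] at this
        simp at this
      rw [ker_succ, ker_eq_FF m (fun j => a j.succ),
        show List.ofFn a = a 0 :: List.ofFn (fun i => a i.succ) from List.ofFn_succ (f := a)]
      show conv (g1 (a 0)) (FF (List.ofFn fun i => a i.succ)) = F (a 0) (List.ofFn fun i => a i.succ)
      exact (F_eq_conv_FF hne (a 0)).symm

lemma conv_eq_intervalIntegral {f g : ℝ → ℂ} (hf : Nice f) (hg : Nice g) {t : ℝ} (ht : 0 ≤ t) :
    conv f g t = ∫ x in (0:ℝ)..t, f x * g (t - x) := by
  rw [intervalIntegral.integral_of_le ht, ← integral_Icc_eq_integral_Ioc]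
  symm
  apply setIntegral_eq_integral_of_forall_compl_eq_zero
  intro x hx
  simp only [Set.mem_Icc, not_and_or, not_le] at hx
  rcases hx with h | h
  · rw [hf.zero x h, zero_mul]
  · rw [hg.zero _ (by linarith), mul_zero]

end FKaux

open FKaux in
/-- Semigroup property of the free kernel (Proposition 2.4): if `I₁, I₂` are nonempty
disjoint subsets of `{0,…,m}` (with cardinalities `k₁+1` and `k₂+1`) whose union is all
of `{0,…,m}`, then for all `t > 0` and momenta `p₀,…,p_m`,
`K(t; p₀,…,p_m) = -i ∫₀ᵗ K(s; (p_j)_{j∈I₁}) K(t-s; (p_j)_{j∈I₂}) ds`,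
where the momenta of each factor are listed in increasing order of index. -/
theorem freeKernel_semigroup (m : ℕ) (hm : 1 ≤ m)
    (I₁ I₂ : Finset (Fin (m + 1))) (hdisj : Disjoint I₁ I₂)
    (hunion : I₁ ∪ I₂ = Finset.univ)
    (k₁ k₂ : ℕ) (hc₁ : I₁.card = k₁ + 1) (hc₂ : I₂.card = k₂ + 1)
    (t : ℝ) (ht : 0 < t) (p : Fin (m + 1) → E3) :
    freeKernel m t p = -Complex.I * ∫ s in (0 : ℝ)..t,
      freeKernel k₁ s (fun j => p ((I₁.orderIsoOfFin hc₁ j : I₁) : Fin (m + 1))) *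
      freeKernel k₂ (t - s) (fun j => p ((I₂.orderIsoOfFin hc₂ j : I₂) : Fin (m + 1))) := by
  classical
  have hm' : m = k₁ + k₂ + 1 := by
    have h2 : (I₁ ∪ I₂).card = I₁.card + I₂.card := Finset.card_union_of_disjoint hdisj
    rw [hunion, Finset.card_univ, Fintype.card_fin, hc₁, hc₂] at h2
    omega
  set a : Fin (m+1) → ℝ := fun j => ‖p j‖^2/2 with ha
  set a₁ : Fin (k₁+1) → ℝ := fun j => a ((I₁.orderIsoOfFin hc₁ j : I₁) : Fin (m+1)) with ha₁
  set a₂ : Fin (k₂+1) → ℝ := fun j => a ((I₂.orderIsoOfFin hc₂ j : I₂) : Fin (m+1)) with ha₂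
  have hofn1 : List.ofFn (fun j => ((I₁.orderIsoOfFin hc₁ j : I₁) : Fin (m+1))) = I₁.sort (· ≤ ·) := by
    apply List.ext_getElem
    · simp [Finset.length_sort, hc₁]
    · intro i h1 h2
      rw [List.getElem_ofFn]
      rfl
  have hofn2 : List.ofFn (fun j => ((I₂.orderIsoOfFin hc₂ j : I₂) : Fin (m+1))) = I₂.sort (· ≤ ·) := by
    apply List.ext_getElem
    · simp [Finset.length_sort, hc₂]
    · intro i h1 h2
      rw [List.getElem_ofFn]
      rfl
  have coe1 : (List.ofFn a₁ : Multiset ℝ) = Multiset.map a I₁.val := by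
    have h : List.ofFn a₁
        = List.map a (List.ofFn (fun j => ((I₁.orderIsoOfFin hc₁ j : I₁) : Fin (m+1)))) := by
      rw [List.map_ofFn]; rfl
    rw [h, hofn1, ← Multiset.map_coe, Finset.sort_eq]
  have coe2 : (List.ofFn a₂ : Multiset ℝ) = Multiset.map a I₂.val := by
    have h : List.ofFn a₂
        = List.map a (List.ofFn (fun j => ((I₂.orderIsoOfFin hc₂ j : I₂) : Fin (m+1)))) := by
      rw [List.map_ofFn]; rfl
    rw [h, hofn2, ← Multiset.map_coe, Finset.sort_eq]
  have coe0 : (List.ofFn a : Multiset ℝ) = Multiset.map a (Finset.univ : Finset (Fin (m+1))).val := by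
    rw [List.ofFn_eq_map, ← Multiset.map_coe]
    rfl
  have hval : (Finset.univ : Finset (Fin (m+1))).val = I₁.val + I₂.val := by
    rw [← hunion, ← Finset.disjUnion_eq_union I₁ I₂ hdisj]
    rfl
  have hperm : (List.ofFn a).Perm (List.ofFn a₁ ++ List.ofFn a₂) := by
    rw [← Multiset.coe_eq_coe]
    have happ : ((List.ofFn a₁ ++ List.ofFn a₂ : List ℝ) : Multiset ℝ)
        = (List.ofFn a₁ : Multiset ℝ) + (List.ofFn a₂ : Multiset ℝ) := by exact_mod_cast rfl
    rw [happ, coe0, coe1, coe2, hval, Multiset.map_add]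
  have hne₁ : List.ofFn a₁ ≠ [] := by
    intro h
    have := List.length_ofFn (f := a₁)
    rw [h] at this
    simp at this
  have hne₂ : List.ofFn a₂ ≠ [] := by
    intro h
    have := List.length_ofFn (f := a₂)
    rw [h] at this
    simp at this
  have hnice₁ : Nice (FF (List.ofFn a₁)) := FF_nice hne₁
  have hnice₂ : Nice (FF (List.ofFn a₂)) := FF_nice hne₂
  have key : ker m a t = conv (FF (List.ofFn a₁)) (FF (List.ofFn a₂)) t := by
    rw [ker_eq_FF, FF_perm hperm, FF_append hne₁ hne₂]
  have hiv : conv (FF (List.ofFn a₁)) (FF (List.ofFn a₂)) t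
      = ∫ s in (0:ℝ)..t, FF (List.ofFn a₁) s * FF (List.ofFn a₂) (t - s) :=
    conv_eq_intervalIntegral hnice₁ hnice₂ ht.le
  have hK1 : ∀ s : ℝ, freeKernel k₁ s (fun j => p ((I₁.orderIsoOfFin hc₁ j : I₁) : Fin (m + 1)))
      = (-Complex.I)^k₁ * FF (List.ofFn a₁) s := by
    intro s
    rw [show freeKernel k₁ s (fun j => p ((I₁.orderIsoOfFin hc₁ j : I₁) : Fin (m + 1)))
      = (-Complex.I)^k₁ * ker k₁ a₁ s from rfl, ker_eq_FF]
  have hK2 : ∀ s : ℝ, freeKernel k₂ s (fun j => p ((I₂.orderIsoOfFin hc₂ j : I₂) : Fin (m + 1)))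
      = (-Complex.I)^k₂ * FF (List.ofFn a₂) s := by
    intro s
    rw [show freeKernel k₂ s (fun j => p ((I₂.orderIsoOfFin hc₂ j : I₂) : Fin (m + 1)))
      = (-Complex.I)^k₂ * ker k₂ a₂ s from rfl, ker_eq_FF]
  have hLHS : freeKernel m t p = (-Complex.I)^m * ker m a t := rfl
  rw [hLHS, key, hiv]
  have hintegrand : ∀ s : ℝ,
      freeKernel k₁ s (fun j => p ((I₁.orderIsoOfFin hc₁ j : I₁) : Fin (m + 1))) *
        freeKernel k₂ (t - s) (fun j => p ((I₂.orderIsoOfFin hc₂ j : I₂) : Fin (m + 1)))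
      = (-Complex.I)^(k₁+k₂) * (FF (List.ofFn a₁) s * FF (List.ofFn a₂) (t - s)) := by
    intro s
    rw [hK1 s, hK2 (t - s), pow_add]
    ring
  simp_rw [hintegrand]
  rw [intervalIntegral.integral_const_mul]
  rw [hm']
  ring
end
end

section
/- (Fourier transform of the outgoing free Green's function on ℝ³; the identity underlying the resolvent kernel computations of Section 5.) Let w ∈ ℂ with Im w > 0. Then for every p ∈ ℝ³ the function x ↦ ( e^{i w |x|} / |x| ) e^{−i p·x} is absolutely integrable on ℝ³, and ∫_{ℝ³} ( e^{i w |x|} / |x| ) e^{−i p·x} dx = 4π / ( |p|² − w² ). -/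
noncomputable section

open MeasureTheory Complex

open Set Filter Topology

lemma yk_exp_integrableOn_Ioi (α : ℂ) (hα : α.re < 0) :
    IntegrableOn (fun z : ℝ => Complex.exp (α * z)) (Set.Ioi 0) := by
  have hb : 0 < -α.re := by linarith
  refine (exp_neg_integrableOn_Ioi 0 hb).mono' ?_ ?_
  · exact (Complex.continuous_exp.comp
      (continuous_const.mul Complex.continuous_ofReal)).aestronglyMeasurable
  · refine ae_of_all _ fun z => ?_
    have h1 : (α * (z:ℂ)).re = α.re * z := by simp [Complex.mul_re]
    simp [Complex.norm_exp, h1, neg_neg]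

lemma yk_integral_exp_Ioi (α : ℂ) (hα : α.re < 0) :
    ∫ z in Set.Ioi (0:ℝ), Complex.exp (α * z) = -α⁻¹ := by
  have hα0 : α ≠ 0 := fun h => by simp [h] at hα
  have hderiv : ∀ z ∈ Set.Ioi (0:ℝ),
      HasDerivAt (fun z : ℝ => Complex.exp (α * z) / α) (Complex.exp (α * z)) z := by
    intro z _
    have h1 : HasDerivAt (fun z : ℝ => α * (z:ℂ)) α z := by
      simpa using ((hasDerivAt_id z).ofReal_comp (z := z)).const_mul α
    have h2 := (h1.cexp).div_const α
    exact h2.congr_deriv (by field_simp)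
  have hcont : ContinuousWithinAt (fun z : ℝ => Complex.exp (α * z) / α) (Set.Ici 0) 0 :=
    ((Complex.continuous_exp.comp
      (continuous_const.mul Complex.continuous_ofReal)).div_const α).continuousWithinAt
  have htend : Tendsto (fun z : ℝ => Complex.exp (α * z) / α) atTop (𝓝 0) := by
    rw [tendsto_zero_iff_norm_tendsto_zero]
    have heq : (fun z : ℝ => ‖Complex.exp (α * z) / α‖)
        = fun z : ℝ => Real.exp (α.re * z) / ‖α‖ := by
      funext z
      have h1 : (α * (z:ℂ)).re = α.re * z := by simp [Complex.mul_re]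
      simp [Complex.norm_exp, h1, norm_div]
    rw [heq]
    have h2 : Tendsto (fun z : ℝ => α.re * z) atTop atBot :=
      Tendsto.const_mul_atTop_of_neg hα tendsto_id
    simpa using (Real.tendsto_exp_atBot.comp h2).div_const ‖α‖
  have := integral_Ioi_of_hasDerivAt_of_tendsto hcont hderiv (yk_exp_integrableOn_Ioi α hα) htend
  simpa using this

lemma yk_exp_integrableOn_Iic (β : ℂ) (hβ : 0 < β.re) :
    IntegrableOn (fun z : ℝ => Complex.exp (β * z)) (Set.Iic 0) := by
  have A : MeasurableEmbedding fun x : ℝ => -x :=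
    (Homeomorph.neg ℝ).isClosedEmbedding.measurableEmbedding
  have hG : IntegrableOn (fun z : ℝ => Complex.exp ((-β) * z)) (Set.Ici 0) := by
    rw [integrableOn_Ici_iff_integrableOn_Ioi]
    exact yk_exp_integrableOn_Ioi (-β) (by simpa using hβ)
  have h3 : Measure.map (fun x : ℝ => -x) (volume.restrict ((fun x : ℝ => -x) ⁻¹' Set.Ici 0))
      = volume.restrict (Set.Ici 0) := by
    rw [← Measure.restrict_map A.measurable measurableSet_Ici, Measure.map_neg_eq_self]
  have h4 : Integrable (fun z : ℝ => Complex.exp ((-β) * z))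
      (Measure.map (fun x : ℝ => -x) (volume.restrict ((fun x : ℝ => -x) ⁻¹' Set.Ici 0))) := by
    rw [h3]; exact hG
  have h5 := A.integrable_map_iff.1 h4
  have h6 : ((fun x : ℝ => -x) ⁻¹' Set.Ici 0) = Set.Iic (0:ℝ) := by
    ext z; simp
  rw [h6] at h5
  refine h5.congr (ae_of_all _ fun z => ?_)
  show Complex.exp ((-β) * ((-z : ℝ) : ℂ)) = Complex.exp (β * z)
  push_cast
  ring_nf

lemma yk_integral_exp_Iic (β : ℂ) (hβ : 0 < β.re) :
    ∫ z in Set.Iic (0:ℝ), Complex.exp (β * z) = β⁻¹ := by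
  have h1 : (fun z : ℝ => Complex.exp (β * z))
      = fun z : ℝ => Complex.exp ((-β) * ((-z : ℝ) : ℂ)) := by
    funext z; push_cast; ring_nf
  rw [h1, integral_comp_neg_Iic 0 (fun z : ℝ => Complex.exp ((-β) * z)), neg_zero,
    yk_integral_exp_Ioi (-β) (by simpa using hβ)]
  rw [inv_neg, neg_neg]

lemma yk_sqrt_ge (ρ z : ℝ) : ρ ≤ Real.sqrt (ρ^2 + z^2) := by
  rcases le_or_gt ρ 0 with h | h
  · exact h.trans (Real.sqrt_nonneg _)
  · calc ρ = Real.sqrt (ρ^2) := (Real.sqrt_sq h.le).symm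
    _ ≤ Real.sqrt (ρ^2 + z^2) := Real.sqrt_le_sqrt (by nlinarith)

lemma yk_re_Iw (w : ℂ) (r : ℝ) : (Complex.I * w * (r:ℂ)).re = -w.im * r := by
  simp [Complex.mul_re, Complex.mul_im]

lemma yk_rho_integrableOn (w : ℂ) (hw : 0 < w.im) (z : ℝ) :
    IntegrableOn (fun ρ : ℝ =>
      (ρ:ℂ) * (Complex.exp (Complex.I * w * (Real.sqrt (ρ^2+z^2) : ℝ)) /
        ((Real.sqrt (ρ^2+z^2) : ℝ) : ℂ))) (Set.Ioi 0) := by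
  have hsq : Continuous fun ρ : ℝ => Real.sqrt (ρ^2 + z^2) :=
    Real.continuous_sqrt.comp (((continuous_pow 2).add continuous_const))
  have hsqc : Continuous fun ρ : ℝ => ((Real.sqrt (ρ^2+z^2) : ℝ) : ℂ) :=
    Complex.continuous_ofReal.comp hsq
  have hnum : Continuous fun ρ : ℝ => Complex.exp (Complex.I * w * (Real.sqrt (ρ^2+z^2) : ℝ)) :=
    Complex.continuous_exp.comp (continuous_const.mul hsqc)
  have hpos : ∀ ρ ∈ Set.Ioi (0:ℝ), 0 < Real.sqrt (ρ^2+z^2) := fun ρ hρ => by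
    have : (0:ℝ) < ρ := hρ
    positivity
  have hmeas : AEStronglyMeasurable (fun ρ : ℝ =>
      (ρ:ℂ) * (Complex.exp (Complex.I * w * (Real.sqrt (ρ^2+z^2) : ℝ)) /
        ((Real.sqrt (ρ^2+z^2) : ℝ) : ℂ))) (volume.restrict (Set.Ioi 0)) := by
    refine ContinuousOn.aestronglyMeasurable ?_ measurableSet_Ioi
    exact Complex.continuous_ofReal.continuousOn.mul
      (hnum.continuousOn.div hsqc.continuousOn
        (fun ρ hρ => Complex.ofReal_ne_zero.2 (hpos ρ hρ).ne'))
  refine (exp_neg_integrableOn_Ioi 0 hw).mono' hmeas ?_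
  rw [ae_restrict_iff' measurableSet_Ioi]
  refine ae_of_all _ fun ρ hρ => ?_
  have hρ0 : (0:ℝ) < ρ := hρ
  have hs := hpos ρ hρ
  rw [norm_mul, norm_div, Complex.norm_exp, yk_re_Iw,
    Complex.norm_real, Complex.norm_real, Real.norm_eq_abs, Real.norm_eq_abs,
    abs_of_pos hρ0, abs_of_pos hs]
  have h1 : ρ / Real.sqrt (ρ^2+z^2) ≤ 1 := (div_le_one hs).2 (yk_sqrt_ge ρ z)
  have h2 : Real.exp (-w.im * Real.sqrt (ρ^2+z^2)) ≤ Real.exp (-w.im * ρ) :=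
    Real.exp_le_exp.2 (by nlinarith [yk_sqrt_ge ρ z])
  calc ρ * (Real.exp (-w.im * Real.sqrt (ρ^2+z^2)) / Real.sqrt (ρ^2+z^2))
      = (ρ / Real.sqrt (ρ^2+z^2)) * Real.exp (-w.im * Real.sqrt (ρ^2+z^2)) := by ring
    _ ≤ 1 * Real.exp (-w.im * ρ) := mul_le_mul h1 h2 (Real.exp_nonneg _) one_pos.le
    _ = Real.exp (-w.im * ρ) := one_mul _

lemma yk_rho_integral (w : ℂ) (hw : 0 < w.im) (z : ℝ) :
    ∫ ρ in Set.Ioi (0:ℝ),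
      (ρ:ℂ) * (Complex.exp (Complex.I * w * (Real.sqrt (ρ^2+z^2) : ℝ)) /
        ((Real.sqrt (ρ^2+z^2) : ℝ) : ℂ))
      = -Complex.exp (Complex.I * w * (|z| : ℝ)) / (Complex.I * w) := by
  have hw0 : w ≠ 0 := fun h => by simp [h] at hw
  have hIw : Complex.I * w ≠ 0 := mul_ne_zero Complex.I_ne_zero hw0
  have hsq : Continuous fun ρ : ℝ => Real.sqrt (ρ^2 + z^2) :=
    Real.continuous_sqrt.comp (((continuous_pow 2).add continuous_const))
  set f : ℝ → ℂ := fun ρ =>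
    Complex.exp (Complex.I * w * (Real.sqrt (ρ^2+z^2) : ℝ)) / (Complex.I * w) with hf
  have hcont : ContinuousWithinAt f (Set.Ici 0) 0 :=
    ((Complex.continuous_exp.comp
      (continuous_const.mul (Complex.continuous_ofReal.comp hsq))).div_const
        (Complex.I * w)).continuousWithinAt
  have hderiv : ∀ ρ ∈ Set.Ioi (0:ℝ), HasDerivAt f
      ((ρ:ℂ) * (Complex.exp (Complex.I * w * (Real.sqrt (ρ^2+z^2) : ℝ)) /
        ((Real.sqrt (ρ^2+z^2) : ℝ) : ℂ))) ρ := by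
    intro ρ hρ
    have hρ0 : (0:ℝ) < ρ := hρ
    have hargpos : (0:ℝ) < ρ^2 + z^2 := by positivity
    have hspos : (0:ℝ) < Real.sqrt (ρ^2+z^2) := Real.sqrt_pos.2 hargpos
    have hu : HasDerivAt (fun ρ : ℝ => ρ^2 + z^2) (2*ρ) ρ := by
      simpa using (hasDerivAt_pow 2 ρ).add_const (z^2)
    have hsqrt : HasDerivAt (fun ρ : ℝ => Real.sqrt (ρ^2+z^2))
        (2*ρ / (2 * Real.sqrt (ρ^2+z^2))) ρ := hu.sqrt hargpos.ne'
    have h2 := (((hsqrt.ofReal_comp).const_mul (Complex.I * w)).cexp).div_const (Complex.I * w)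
    refine h2.congr_deriv ?_
    have hsne : ((Real.sqrt (ρ^2+z^2) : ℝ) : ℂ) ≠ 0 := Complex.ofReal_ne_zero.2 hspos.ne'
    push_cast
    field_simp
  have htend : Tendsto f atTop (𝓝 0) := by
    have hb : ∀ ρ : ℝ, ‖f ρ‖ ≤ Real.exp (-w.im * ρ) / ‖Complex.I * w‖ := by
      intro ρ
      rw [hf]
      simp only [norm_div, Complex.norm_exp, yk_re_Iw]
      refine (div_le_div_iff_of_pos_right (norm_pos_iff.2 hIw)).2 ?_
      exact Real.exp_le_exp.2 (by nlinarith [yk_sqrt_ge ρ z, hw])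
    have h2 : Tendsto (fun ρ : ℝ => -w.im * ρ) atTop atBot :=
      Tendsto.const_mul_atTop_of_neg (by linarith) tendsto_id
    have h3 : Tendsto (fun ρ : ℝ => Real.exp (-w.im * ρ) / ‖Complex.I * w‖) atTop (𝓝 0) := by
      simpa using (Real.tendsto_exp_atBot.comp h2).div_const ‖Complex.I * w‖
    exact squeeze_zero_norm hb h3
  have := integral_Ioi_of_hasDerivAt_of_tendsto hcont hderiv (yk_rho_integrableOn w hw z) htend
  rw [this, hf]
  simp [Real.sqrt_sq_eq_abs, neg_div]


lemma yk_integrable_bound (a : ℝ) (ha : 0 < a) :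
    Integrable (fun x : E3 => Real.exp (-a * ‖x‖) / ‖x‖) := by
  set f : ℝ → ℝ := fun r => Real.exp (-a * r) / r with hfdef
  have hs : MeasurableSet ({0}ᶜ : Set E3) := (measurableSet_singleton 0).compl
  have hIoi : IntegrableOn (fun r : ℝ => r ^ 2 * f r) (Set.Ioi 0) := by
    have h0 := integrableOn_rpow_mul_exp_neg_mul_rpow (p := 1) (s := 1) (b := a)
      (by norm_num) (by norm_num) ha
    refine h0.congr_fun (fun r hr => ?_) measurableSet_Ioi
    have hr0 : (0:ℝ) < r := hr
    simp only [hfdef]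
    field_simp
    simp only [Real.rpow_one]
    ring
  have hsub : Integrable ((fun r : ℝ => r ^ 2 * f r) ∘ (Subtype.val : Set.Ioi (0:ℝ) → ℝ))
      (volume.comap Subtype.val) := by
    refine ((MeasurableEmbedding.subtype_coe measurableSet_Ioi).integrable_map_iff).1 ?_
    rw [map_comap_subtype_coe measurableSet_Ioi]
    exact hIoi
  have hvol : Integrable (fun r : Set.Ioi (0:ℝ) => f r) (Measure.volumeIoiPow 2) := by
    rw [Measure.volumeIoiPow, integrable_withDensity_iff_integrable_smul'
      ((measurable_subtype_coe.pow_const 2).ennreal_ofReal)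
      (ae_of_all _ fun r => ENNReal.ofReal_lt_top)]
    refine hsub.congr (ae_of_all _ fun r => ?_)
    show (r:ℝ) ^ 2 * f r = (ENNReal.ofReal ((r:ℝ) ^ 2)).toReal • f r
    rw [ENNReal.toReal_ofReal (sq_nonneg _), smul_eq_mul]
  have hprod : Integrable (fun y : Metric.sphere (0:E3) 1 × Set.Ioi (0:ℝ) => f y.2)
      ((volume : Measure E3).toSphere.prod (Measure.volumeIoiPow 2)) := by
    have h1 := (integrable_const (μ := (volume : Measure E3).toSphere) (1:ℝ)).mul_prod hvol
    simpa using h1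
  have hcomap : Integrable (fun x : ({0}ᶜ : Set E3) => f ‖(x:E3)‖)
      (volume.comap Subtype.val) := by
    have hmp := Measure.measurePreserving_homeomorphUnitSphereProd (volume : Measure E3)
    have hdim : Module.finrank ℝ E3 - 1 = 2 := by
      rw [finrank_euclideanSpace_fin]
    rw [hdim] at hmp
    have h2 := (hmp.integrable_comp_emb (Homeomorph.measurableEmbedding _)).2 hprod
    refine h2.congr (ae_of_all _ fun x => ?_)
    show f (((homeomorphUnitSphereProd E3) x).2 : ℝ) = f ‖(x:E3)‖
    rw [homeomorphUnitSphereProd_apply_snd_coe]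
  have hfin : IntegrableOn (fun x : E3 => f ‖x‖) {0}ᶜ := by
    rw [IntegrableOn, ← map_comap_subtype_coe hs,
      (MeasurableEmbedding.subtype_coe hs).integrable_map_iff]
    exact hcomap
  rw [IntegrableOn, restrict_compl_singleton] at hfin
  exact hfin

/-- Fourier transform of the outgoing free Green's function on `ℝ³`: for `w ∈ ℂ`
with `Im w > 0` and `p ∈ ℝ³`, the function `x ↦ (e^{iw|x|}/|x|) e^{-ip·x}` is
absolutely integrable on `ℝ³` and
`∫ (e^{iw|x|}/|x|) e^{-ip·x} dx = 4π/(|p|² - w²)`. -/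
theorem yukawa_fourier_transform (w : ℂ) (hw : 0 < w.im) (p : E3) :
    Integrable (fun x : E3 =>
      Complex.exp (Complex.I * w * (‖x‖ : ℂ)) / (‖x‖ : ℂ) *
        Complex.exp (-Complex.I * ((inner ℝ p x : ℝ) : ℂ))) ∧
    (∫ x : E3, Complex.exp (Complex.I * w * (‖x‖ : ℂ)) / (‖x‖ : ℂ) *
        Complex.exp (-Complex.I * ((inner ℝ p x : ℝ) : ℂ))) =
      4 * (Real.pi : ℂ) / (((‖p‖ ^ 2 : ℝ) : ℂ) - w ^ 2) := by
  have hw0 : w ≠ 0 := fun h => by simp [h] at hw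
  have hIw : Complex.I * w ≠ 0 := mul_ne_zero Complex.I_ne_zero hw0
  set F : E3 → ℂ := fun x =>
    Complex.exp (Complex.I * w * (‖x‖ : ℂ)) / (‖x‖ : ℂ) *
      Complex.exp (-Complex.I * ((inner ℝ p x : ℝ) : ℂ)) with hF
  set c : ℝ := ‖p‖ with hc
  -- Integrability
  have hFnorm : ∀ x : E3, ‖F x‖ = Real.exp (-w.im * ‖x‖) / ‖x‖ := by
    intro x
    rw [hF]
    simp only [norm_mul, norm_div, Complex.norm_exp,
      yk_re_Iw, Complex.norm_real, Real.norm_eq_abs, abs_norm]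
    have h2 : (-Complex.I * ((inner ℝ p x : ℝ) : ℂ)).re = 0 := by simp
    rw [h2, Real.exp_zero, mul_one]
  have hFmeas : AEStronglyMeasurable F := by
    apply Measurable.aestronglyMeasurable
    have m1 : Measurable fun x : E3 => ((‖x‖ : ℝ) : ℂ) :=
      Complex.measurable_ofReal.comp measurable_norm
    have m2 : Measurable fun x : E3 => Complex.exp (Complex.I * w * (‖x‖ : ℂ)) :=
      Complex.measurable_exp.comp (m1.const_mul _)
    have m3 : Measurable fun x : E3 => ((inner ℝ p x : ℝ) : ℂ) :=
      Complex.measurable_ofReal.comp (continuous_const.inner continuous_id).measurable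
    exact (m2.div m1).mul (Complex.measurable_exp.comp (m3.const_mul _))
  have hF_int : Integrable F :=
    (yk_integrable_bound w.im hw).mono' hFmeas (ae_of_all _ fun x => (hFnorm x).le)
  refine ⟨hF_int, ?_⟩
  -- geometry
  set q : E3 := c • EuclideanSpace.single (0 : Fin 3) (1:ℝ) with hq
  have hqnorm : ‖q‖ = c := by
    rw [hq, norm_smul, EuclideanSpace.norm_single]
    simp [hc, _root_.abs_of_nonneg (norm_nonneg p)]
  set T := Submodule.reflection (ℝ ∙ (p - q))ᗮ with hT
  have hTp : T p = q := Submodule.reflection_sub hqnorm.symm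
  have hTq : T q = p := by rw [← hTp]; exact Submodule.reflection_reflection _ p
  have hinner : ∀ y : E3, (inner ℝ p (T y) : ℝ) = c * y 0 := by
    intro y
    have h1 : (inner ℝ p (T y) : ℝ) = inner ℝ q y := by
      conv_lhs => rw [← hTq]
      exact T.inner_map_map q y
    rw [h1, hq, real_inner_smul_left, EuclideanSpace.inner_single_left]
    simp
  -- measurable equivalences
  let eT : E3 ≃ᵐ E3 := T.toHomeomorph.toMeasurableEquiv
  let e1 : E3 ≃ᵐ (Fin 3 → ℝ) := (MeasurableEquiv.toLp 2 (Fin 3 → ℝ)).symm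
  let e2 : (Fin 3 → ℝ) ≃ᵐ ℝ × (Fin 2 → ℝ) := MeasurableEquiv.piFinSuccAbove (fun _ => ℝ) 0
  let e3 : (ℝ × (Fin 2 → ℝ)) ≃ᵐ ℝ × ℝ × ℝ :=
    (MeasurableEquiv.refl ℝ).prodCongr MeasurableEquiv.finTwoArrow
  let Φ : (ℝ × ℝ × ℝ) ≃ᵐ E3 := ((e3.symm.trans e2.symm).trans e1.symm).trans eT
  have hΦmp : MeasurePreserving Φ volume volume := by
    have h1 : MeasurePreserving (⇑eT) volume volume := T.measurePreserving
    have h2 : MeasurePreserving (⇑e1.symm) volume volume :=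
      (EuclideanSpace.volume_preserving_symm_measurableEquiv_toLp (Fin 3)).symm e1
    have h3 : MeasurePreserving (⇑e2.symm) volume volume :=
      (volume_preserving_piFinSuccAbove (fun _ : Fin 3 => ℝ) 0).symm e2
    have h4 : MeasurePreserving (⇑e3.symm) volume volume :=
      ((MeasurePreserving.id volume).prod (volume_preserving_finTwoArrow ℝ)).symm e3
    exact (h1.comp (h2.comp (h3.comp h4)) : _)
  set S : ℝ × ℝ × ℝ → ℝ := fun v => Real.sqrt (v.2.1^2 + v.2.2^2 + v.1^2) with hS
  set G : ℝ × ℝ × ℝ → ℂ := fun v => Complex.exp (Complex.I * w * (S v : ℂ)) / (S v : ℂ) *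
    Complex.exp (-Complex.I * ((c * v.1 : ℝ) : ℂ)) with hG
  have hcoord : ∀ v : ℝ × ℝ × ℝ, ∀ i : Fin 3,
      (e1.symm (e2.symm (e3.symm v))) i = ![v.1, v.2.1, v.2.2] i := by
    intro v i
    fin_cases i <;> rfl
  have hFΦ : ∀ v, F (Φ v) = G v := by
    intro v
    have hΦv : Φ v = T (e1.symm (e2.symm (e3.symm v))) := rfl
    have hnorm : ‖Φ v‖ = S v := by
      rw [hΦv, T.norm_map, EuclideanSpace.norm_eq]
      rw [hS]
      congr 1
      rw [Fin.sum_univ_three, hcoord v 0, hcoord v 1, hcoord v 2]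
      simp [Real.norm_eq_abs, _root_.sq_abs]
      ring
    have hinn : (inner ℝ p (Φ v) : ℝ) = c * v.1 := by
      rw [hΦv, hinner, hcoord v 0]
      rfl
    rw [hF, hG]
    simp only [hnorm, hinn]
  have hG_int : Integrable G := by
    have h5 := (hΦmp.integrable_comp_emb Φ.measurableEmbedding).2 hF_int
    exact h5.congr (ae_of_all _ fun v => hFΦ v)
  have hIntEq : ∫ x, F x = ∫ v, G v := by
    rw [← hΦmp.integral_comp Φ.measurableEmbedding F]
    exact integral_congr_ae (ae_of_all _ fun v => hFΦ v)
  have hinner_eval : ∀ z : ℝ, (∫ y : ℝ × ℝ, G (z, y))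
      = (-Complex.exp (Complex.I * w * ((|z| : ℝ) : ℂ)) / (Complex.I * w)) * ((2 * Real.pi : ℝ) : ℂ)
        * Complex.exp (-Complex.I * ((c * z : ℝ) : ℂ)) := by
    intro z
    have hGz : (fun y : ℝ × ℝ => G (z, y)) = fun y : ℝ × ℝ =>
        (Complex.exp (Complex.I * w * ((Real.sqrt (y.1^2 + y.2^2 + z^2) : ℝ) : ℂ)) /
          ((Real.sqrt (y.1^2 + y.2^2 + z^2) : ℝ) : ℂ)) *
          Complex.exp (-Complex.I * ((c * z : ℝ) : ℂ)) := rfl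
    rw [hGz, integral_mul_const]
    congr 1
    rw [← integral_comp_polarCoord_symm]
    have hms : MeasurableSet polarCoord.target := polarCoord.open_target.measurableSet
    have hEq : Set.EqOn (fun q : ℝ × ℝ => q.1 •
        (Complex.exp (Complex.I * w * ((Real.sqrt ((polarCoord.symm q).1^2 + (polarCoord.symm q).2^2 + z^2) : ℝ) : ℂ)) /
          ((Real.sqrt ((polarCoord.symm q).1^2 + (polarCoord.symm q).2^2 + z^2) : ℝ) : ℂ)))
        (fun q : ℝ × ℝ =>
          ((q.1 : ℂ) * (Complex.exp (Complex.I * w * ((Real.sqrt (q.1^2+z^2) : ℝ) : ℂ)) /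
            ((Real.sqrt (q.1^2+z^2) : ℝ) : ℂ))) * (1 : ℂ)) polarCoord.target := by
      intro x hx
      have hx1 : 0 < x.1 := hx.1
      have harg : (x.1 * Real.cos x.2)^2 + (x.1 * Real.sin x.2)^2 + z^2 = x.1^2 + z^2 := by
        have h := Real.sin_sq_add_cos_sq x.2
        nlinarith [h]
      have hps : polarCoord.symm x = (x.1 * Real.cos x.2, x.1 * Real.sin x.2) := rfl
      simp only [hps, harg, mul_one]
      rw [Complex.real_smul]
    rw [setIntegral_congr_fun hms hEq]
    rw [show polarCoord.target = Set.Ioi (0:ℝ) ×ˢ Set.Ioo (-Real.pi) Real.pi from rfl]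
    rw [Measure.volume_eq_prod, ← Measure.prod_restrict]
    rw [integral_prod_mul (μ := volume.restrict (Set.Ioi (0:ℝ)))
      (ν := volume.restrict (Set.Ioo (-Real.pi) Real.pi))
      (f := fun ρ : ℝ => (ρ : ℂ) * (Complex.exp (Complex.I * w * ((Real.sqrt (ρ^2+z^2) : ℝ) : ℂ)) /
        ((Real.sqrt (ρ^2+z^2) : ℝ) : ℂ)))
      (g := fun _ : ℝ => (1:ℂ))]
    rw [yk_rho_integral w hw z, integral_const, measureReal_restrict_apply_univ,
      Real.volume_real_Ioo_of_le (by linarith [Real.pi_pos]), sub_neg_eq_add, Complex.real_smul, mul_one]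
    push_cast
    ring
  have houter : (∫ v, G v) = (-((2*Real.pi : ℝ) : ℂ) / (Complex.I*w)) * ∫ z : ℝ,
      Complex.exp (Complex.I*w*((|z|:ℝ):ℂ)) * Complex.exp (-Complex.I*((c*z:ℝ):ℂ)) := by
    rw [Measure.volume_eq_prod] at hG_int
    rw [Measure.volume_eq_prod, integral_prod _ hG_int]
    have hfn : (fun z : ℝ => ∫ y : ℝ×ℝ, G (z,y)) = fun z : ℝ =>
        (-((2*Real.pi:ℝ):ℂ) / (Complex.I*w)) *
          (Complex.exp (Complex.I*w*((|z|:ℝ):ℂ)) * Complex.exp (-Complex.I*((c*z:ℝ):ℂ))) := by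
      funext z
      rw [hinner_eval z]
      field_simp
    rw [hfn, integral_const_mul]
  -- the one-dimensional z-integral
  have hrem : (Complex.I*(w-(c:ℂ))).re = -w.im := by simp [Complex.mul_re]
  have hrep : (-(Complex.I*(w+(c:ℂ)))).re = w.im := by simp [Complex.neg_re, Complex.mul_re]
  have hEqp : Set.EqOn (fun z : ℝ => Complex.exp ((Complex.I*(w-(c:ℂ))) * z))
      (fun z : ℝ => Complex.exp (Complex.I*w*((|z|:ℝ):ℂ)) * Complex.exp (-Complex.I*((c*z:ℝ):ℂ)))
      (Set.Ioi 0) := by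
    intro z hz
    have habs : |z| = z := abs_of_pos hz
    simp only [habs, ← Complex.exp_add]
    congr 1
    push_cast
    ring
  have hEqm : Set.EqOn (fun z : ℝ => Complex.exp ((-(Complex.I*(w+(c:ℂ)))) * z))
      (fun z : ℝ => Complex.exp (Complex.I*w*((|z|:ℝ):ℂ)) * Complex.exp (-Complex.I*((c*z:ℝ):ℂ)))
      (Set.Iic 0) := by
    intro z hz
    have habs : |z| = -z := abs_of_nonpos hz
    simp only [habs, ← Complex.exp_add]
    congr 1
    push_cast
    ring
  have hIntp : IntegrableOn (fun z : ℝ => Complex.exp (Complex.I*w*((|z|:ℝ):ℂ)) *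
      Complex.exp (-Complex.I*((c*z:ℝ):ℂ))) (Set.Ioi 0) :=
    (yk_exp_integrableOn_Ioi _ (by rw [hrem]; linarith)).congr_fun hEqp measurableSet_Ioi
  have hIntm : IntegrableOn (fun z : ℝ => Complex.exp (Complex.I*w*((|z|:ℝ):ℂ)) *
      Complex.exp (-Complex.I*((c*z:ℝ):ℂ))) (Set.Iic 0) :=
    (yk_exp_integrableOn_Iic _ (by rw [hrep]; exact hw)).congr_fun hEqm measurableSet_Iic
  have hJ : (∫ z : ℝ, Complex.exp (Complex.I*w*((|z|:ℝ):ℂ)) * Complex.exp (-Complex.I*((c*z:ℝ):ℂ)))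
      = (-(Complex.I*(w+(c:ℂ))))⁻¹ + -(Complex.I*(w-(c:ℂ)))⁻¹ := by
    rw [← intervalIntegral.integral_Iic_add_Ioi hIntm hIntp]
    rw [← setIntegral_congr_fun measurableSet_Ioi hEqp, ← setIntegral_congr_fun measurableSet_Iic hEqm]
    rw [yk_integral_exp_Ioi _ (by rw [hrem]; linarith), yk_integral_exp_Iic _ (by rw [hrep]; exact hw)]
  -- final algebra
  have hwpc : w + (c:ℂ) ≠ 0 := by
    intro h
    have := congrArg Complex.im h
    simp at this
    linarith
  have hwmc : w - (c:ℂ) ≠ 0 := by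
    intro h
    have := congrArg Complex.im h
    simp at this
    linarith
  have hdenom : ((c:ℂ))^2 - w^2 ≠ 0 := by
    have hfac : ((c:ℂ))^2 - w^2 = -((w+(c:ℂ))*(w-(c:ℂ))) := by ring
    rw [hfac]
    exact neg_ne_zero.2 (mul_ne_zero hwpc hwmc)
  rw [hIntEq, houter, hJ]
  have hcast : ((c^2 : ℝ) : ℂ) = ((c:ℂ))^2 := by push_cast; ring
  rw [hcast]
  field_simp
  push_cast
  linear_combination (4*(Real.pi:ℂ)*w*(((c:ℝ):ℂ)^2 - w^2)) * Complex.I_sq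
end
end

section
/- (Exponential resummation identity for the renormalized kernel; identity (Kren).) Let b ≥ 0 be an integer, t > 0, let a₀, …, a_b be real numbers and c₀, …, c_b complex numbers. Then the family, indexed by (ℓ₀, …, ℓ_b) ∈ ℕ^{b+1}, of numbers ∫_{Δ_b(t)} ∏_{j=0}^{b} [ ((−i s_j)^{ℓ_j} / ℓ_j!) c_j^{ℓ_j} e^{−i s_j a_j} ] ds is absolutely summable, and Σ_{(ℓ₀, …, ℓ_b) ∈ ℕ^{b+1}} ∫_{Δ_b(t)} ∏_{j=0}^{b} [ ((−i s_j)^{ℓ_j} / ℓ_j!) c_j^{ℓ_j} e^{−i s_j a_j} ] ds = ∫_{Δ_b(t)} ∏_{j=0}^{b} e^{−i s_j (a_j + c_j)} ds. -/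
noncomputable section

open MeasureTheory Complex
open scoped ENNReal NNReal

/-! ### Auxiliary lemmas -/

lemma aux_summable_pi (n : ℕ) (f : Fin n → ℕ → ℝ) (h0 : ∀ j k, 0 ≤ f j k)
    (hf : ∀ j, Summable (f j)) :
    Summable (fun ℓ : Fin n → ℕ => ∏ j, f j (ℓ j)) := by
  induction n with
  | zero => exact Summable.of_finite
  | succ n ih =>
    have key := (hf 0).mul_of_nonneg
      (ih (fun j => f j.succ) (fun j k => h0 _ _) (fun j => hf _))
      (fun k => h0 0 k)
      (fun m => Finset.prod_nonneg fun j _ => h0 _ _)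
    refine ((Fin.consEquiv (fun _ : Fin (n+1) => ℕ)).summable_iff).mp ?_
    convert key using 1
    funext p
    simp [Fin.consEquiv, Fin.prod_univ_succ]

lemma aux_tsum_pi (n : ℕ) (f : Fin n → ℕ → ℂ) (hf : ∀ j, Summable fun k => ‖f j k‖) :
    ∑' ℓ : Fin n → ℕ, ∏ j, f j (ℓ j) = ∏ j, ∑' k, f j k := by
  induction n with
  | zero =>
    rw [tsum_eq_single (fun i => Fin.elim0 i) (fun b hb => absurd (Subsingleton.elim _ _) hb)]
    simp
  | succ n ih =>
    have hnorm : Summable fun m : Fin n → ℕ => ‖∏ j : Fin n, f j.succ (m j)‖ := by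
      have := aux_summable_pi n (fun j k => ‖f j.succ k‖) (fun j k => norm_nonneg _)
        (fun j => hf _)
      simpa [norm_prod] using this
    rw [← (Fin.consEquiv (fun _ : Fin (n+1) => ℕ)).tsum_eq]
    have h1 : ∀ p : ℕ × (Fin n → ℕ),
        (∏ j : Fin (n+1), f j ((Fin.consEquiv (fun _ : Fin (n+1) => ℕ)) p j))
          = f 0 p.1 * ∏ j : Fin n, f j.succ (p.2 j) := by
      intro p
      simp [Fin.consEquiv, Fin.prod_univ_succ]
    calc ∑' p : ℕ × (Fin n → ℕ), ∏ j : Fin (n+1), f j ((Fin.consEquiv (fun _ : Fin (n+1) => ℕ)) p j)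
        = ∑' p : ℕ × (Fin n → ℕ), f 0 p.1 * ∏ j : Fin n, f j.succ (p.2 j) := tsum_congr h1
      _ = (∑' k, f 0 k) * ∑' m : Fin n → ℕ, ∏ j : Fin n, f j.succ (m j) :=
          (tsum_mul_tsum_of_summable_norm (hf 0) hnorm).symm
      _ = ∏ j : Fin (n+1), ∑' k, f j k := by
          rw [ih (fun j => f j.succ) (fun j => hf _), Fin.prod_univ_succ]

lemma aux_norm_term (t : ℝ) (x : ℝ) (hx : 0 ≤ x) (hxt : x ≤ t) (z : ℂ) (y : ℝ) (k : ℕ) :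
    ‖(-Complex.I * (x:ℂ)) ^ k / (Nat.factorial k : ℂ) * z ^ k *
        Complex.exp (-Complex.I * (x:ℂ) * (y:ℂ))‖
      ≤ (t * ‖z‖) ^ k / (Nat.factorial k) := by
  have h1 : ‖Complex.exp (-Complex.I * (x:ℂ) * (y:ℂ))‖ = 1 := by
    rw [Complex.norm_exp]; simp
  rw [norm_mul, norm_mul, h1, mul_one, norm_div, norm_pow, norm_pow, norm_mul]
  simp only [norm_neg, Complex.norm_I, Complex.norm_real, Real.norm_eq_abs,
    Complex.norm_natCast, one_mul, _root_.abs_of_nonneg hx, mul_pow, one_pow]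
  rw [div_mul_eq_mul_div]
  have hk : (0:ℝ) < Nat.factorial k := by positivity
  exact div_le_div_of_nonneg_right
    (mul_le_mul_of_nonneg_right (pow_le_pow_left₀ hx hxt k)
      (pow_nonneg (norm_nonneg z) k)) hk.le

lemma aux_exp_sum (x : ℝ) (z : ℂ) (y : ℝ) :
    ∑' k : ℕ, (-Complex.I * (x:ℂ)) ^ k / (Nat.factorial k : ℂ) * z ^ k *
        Complex.exp (-Complex.I * (x:ℂ) * (y:ℂ))
      = Complex.exp (-Complex.I * (x:ℂ) * ((y:ℂ) + z)) := by
  have h : ∀ k : ℕ, (-Complex.I * (x:ℂ)) ^ k / (Nat.factorial k : ℂ) * z ^ k *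
        Complex.exp (-Complex.I * (x:ℂ) * (y:ℂ))
      = (-Complex.I * (x:ℂ) * z) ^ k / (Nat.factorial k : ℂ) *
          Complex.exp (-Complex.I * (x:ℂ) * (y:ℂ)) := by
    intro k; rw [mul_pow]; ring
  rw [tsum_congr h, tsum_mul_right]
  have h2 : ∑' k : ℕ, (-Complex.I * (x:ℂ) * z) ^ k / (Nat.factorial k : ℂ)
      = Complex.exp (-Complex.I * (x:ℂ) * z) := by
    rw [Complex.exp_eq_exp_ℂ, NormedSpace.exp_eq_tsum_div]
  rw [h2, ← Complex.exp_add]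
  ring_nf

/-- Exponential resummation identity for the renormalized kernel (identity (Kren)):
the family, indexed by `(ℓ₀,…,ℓ_b) ∈ ℕ^{b+1}`, of simplex integrals
`∫ ∏_j ((-i s_j)^{ℓ_j}/ℓ_j!) c_j^{ℓ_j} e^{-i s_j a_j} ds` is absolutely summable and
sums to `∫ ∏_j e^{-i s_j (a_j + c_j)} ds`. -/
theorem exponential_resummation (b : ℕ) (t : ℝ) (ht : 0 < t)
    (a : Fin (b + 1) → ℝ) (c : Fin (b + 1) → ℂ) :
    Summable (fun ℓ : Fin (b + 1) → ℕ =>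
      ‖(simplexInt b t (fun s =>
        ∏ j : Fin (b + 1),
          (-Complex.I * (s j : ℂ)) ^ (ℓ j) / (Nat.factorial (ℓ j) : ℂ) * c j ^ (ℓ j) *
            Complex.exp (-Complex.I * (s j : ℂ) * ((a j : ℝ) : ℂ))))‖) ∧
    (∑' ℓ : Fin (b + 1) → ℕ, simplexInt b t (fun s =>
        ∏ j : Fin (b + 1),
          (-Complex.I * (s j : ℂ)) ^ (ℓ j) / (Nat.factorial (ℓ j) : ℂ) * c j ^ (ℓ j) *
            Complex.exp (-Complex.I * (s j : ℂ) * ((a j : ℝ) : ℂ)))) =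
      simplexInt b t (fun s =>
        ∏ j : Fin (b + 1), Complex.exp (-Complex.I * (s j : ℂ) * (((a j : ℝ) : ℂ) + c j))) := by
  -- notation
  set S : Set (Fin b → ℝ) := {s : Fin b → ℝ | (∀ j, 0 ≤ s j) ∧ (∑ j, s j) ≤ t} with hS_def
  set σ : (Fin b → ℝ) → (Fin (b+1) → ℝ) := fun s => Fin.snoc s (t - ∑ j, s j) with hσ_def
  set F : (Fin (b+1) → ℕ) → (Fin (b+1) → ℝ) → ℂ := fun ℓ v =>
    ∏ j : Fin (b + 1),
      (-Complex.I * (v j : ℂ)) ^ (ℓ j) / (Nat.factorial (ℓ j) : ℂ) * c j ^ (ℓ j) *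
        Complex.exp (-Complex.I * (v j : ℂ) * ((a j : ℝ) : ℂ)) with hF_def
  set g : (Fin (b+1) → ℕ) → (Fin b → ℝ) → ℂ := fun ℓ => S.indicator (fun s => F ℓ (σ s))
    with hg_def
  -- measurability of S
  have hS : MeasurableSet S := by
    have : S = (⋂ j, {s : Fin b → ℝ | 0 ≤ s j}) ∩ {s : Fin b → ℝ | (∑ j, s j) ≤ t} := by
      ext s; simp [hS_def, Set.mem_iInter]
    rw [this]
    exact ((MeasurableSet.iInter fun j =>
        measurableSet_le measurable_const (measurable_pi_apply j)).inter
      (measurableSet_le (Finset.measurable_sum _ fun i _ => measurable_pi_apply i)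
        measurable_const))
  -- continuity
  have hσc : Continuous σ := by
    apply continuous_pi
    intro j
    refine Fin.lastCases ?_ ?_ j
    · simp only [hσ_def, Fin.snoc_last]
      exact
        (continuous_const.sub (continuous_finset_sum _ (fun i _ => continuous_apply i)))
    · intro i
      simpa [hσ_def, Fin.snoc_castSucc] using continuous_apply i
  have hFc : ∀ ℓ, Continuous (F ℓ) := by intro ℓ; rw [hF_def]; fun_prop
  have hmeas : ∀ ℓ, AEStronglyMeasurable (g ℓ) volume := fun ℓ =>
    ((((hFc ℓ).comp hσc).stronglyMeasurable).indicator hS).aestronglyMeasurable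
  -- coordinates of σ s lie in [0, t] for s ∈ S
  have hσmem : ∀ s ∈ S, ∀ j, 0 ≤ σ s j ∧ σ s j ≤ t := by
    intro s hs j
    obtain ⟨h0, hsum⟩ := hs
    have hsum0 : 0 ≤ ∑ j, s j := Finset.sum_nonneg fun i _ => h0 i
    refine Fin.lastCases ?_ ?_ j
    · simp only [hσ_def, Fin.snoc_last]
      constructor <;> linarith
    · intro i
      simp only [hσ_def, Fin.snoc_castSucc]
      refine ⟨h0 i, ?_⟩
      calc s i ≤ ∑ j, s j := Finset.single_le_sum (fun i _ => h0 i) (Finset.mem_univ i)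
        _ ≤ t := hsum
  -- dominating constants
  set C : (Fin (b+1) → ℕ) → ℝ := fun ℓ => ∏ j, (t * ‖c j‖) ^ (ℓ j) /
    (Nat.factorial (ℓ j)) with hC_def
  have hC0 : ∀ ℓ, 0 ≤ C ℓ := by
    intro ℓ
    refine Finset.prod_nonneg fun j _ => ?_
    have : 0 ≤ t * ‖c j‖ := mul_nonneg ht.le (norm_nonneg _)
    positivity
  have hCsum : Summable C := by
    refine aux_summable_pi (b+1) (fun j k => (t * ‖c j‖) ^ k / (Nat.factorial k))
      (fun j k => ?_) (fun j => Real.summable_pow_div_factorial _)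
    have : 0 ≤ t * ‖c j‖ := mul_nonneg ht.le (norm_nonneg _)
    positivity
  -- pointwise norm bound
  have hbound : ∀ ℓ s, ‖g ℓ s‖ ≤ S.indicator (fun _ => C ℓ) s := by
    intro ℓ s
    by_cases hs : s ∈ S
    · simp only [hg_def, hF_def, hC_def, Set.indicator_of_mem hs]
      rw [norm_prod]
      refine Finset.prod_le_prod (fun j _ => norm_nonneg _) fun j _ => ?_
      exact aux_norm_term t (σ s j) (hσmem s hs j).1 (hσmem s hs j).2 (c j) (a j) (ℓ j)
    · simp [hg_def, Set.indicator_of_notMem hs]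
  -- S has finite volume
  have hvol : volume S < ⊤ := by
    have hsub : S ⊆ Set.univ.pi (fun _ : Fin b => Set.Icc (0:ℝ) t) := by
      intro s hs i _
      obtain ⟨h0, hsum⟩ := hs
      refine ⟨h0 i, ?_⟩
      calc s i ≤ ∑ j, s j := Finset.single_le_sum (fun i _ => h0 i) (Finset.mem_univ i)
        _ ≤ t := hsum
    calc volume S ≤ volume (Set.univ.pi (fun _ : Fin b => Set.Icc (0:ℝ) t)) :=
          measure_mono hsub
      _ = ∏ _i : Fin b, ENNReal.ofReal (t - 0) := by rw [volume_pi_pi]; simp [Real.volume_Icc]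
      _ < ⊤ := by
          refine ENNReal.prod_lt_top fun i _ => ?_
          exact ENNReal.ofReal_lt_top
  -- lintegral bound
  have hlint : ∀ ℓ, ∫⁻ s, (‖g ℓ s‖₊ : ℝ≥0∞) ≤ ENNReal.ofReal (C ℓ) * volume S := by
    intro ℓ
    have : ∀ s, (‖g ℓ s‖₊ : ℝ≥0∞) ≤ S.indicator (fun _ => ENNReal.ofReal (C ℓ)) s := by
      intro s
      by_cases hs : s ∈ S
      · rw [Set.indicator_of_mem hs, ← ENNReal.ofReal_coe_nnreal, coe_nnnorm]
        refine ENNReal.ofReal_le_ofReal ?_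
        simpa [Set.indicator_of_mem hs] using hbound ℓ s
      · simp [hg_def, Set.indicator_of_notMem hs]
    calc ∫⁻ s, (‖g ℓ s‖₊ : ℝ≥0∞) ≤ ∫⁻ s, S.indicator (fun _ => ENNReal.ofReal (C ℓ)) s :=
          lintegral_mono this
      _ = ENNReal.ofReal (C ℓ) * volume S := by
          rw [lintegral_indicator_const hS]
  -- summability of lintegrals
  have hne : (∑' ℓ : Fin (b+1) → ℕ, ∫⁻ s, (‖g ℓ s‖₊ : ℝ≥0∞)) ≠ ⊤ := by
    refine ne_top_of_le_ne_top ?_ (ENNReal.tsum_le_tsum hlint)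
    rw [ENNReal.tsum_mul_right, ← ENNReal.ofReal_tsum_of_nonneg hC0 hCsum]
    exact ENNReal.mul_ne_top ENNReal.ofReal_ne_top hvol.ne
  -- integral exchange
  have hexch : ∫ s, ∑' ℓ : Fin (b+1) → ℕ, g ℓ s = ∑' ℓ : Fin (b+1) → ℕ, ∫ s, g ℓ s :=
    integral_tsum hmeas hne
  -- simplexInt of F ℓ is ∫ g ℓ
  have hsimp : ∀ ℓ, simplexInt b t (F ℓ) = ∫ s, g ℓ s := fun ℓ => rfl
  constructor
  · -- summability of the absolute values
    refine Summable.of_nonneg_of_le (fun ℓ => norm_nonneg _)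
      (fun ℓ => ?_) (hCsum.mul_left (volume S).toReal)
    have h1 : ‖simplexInt b t (F ℓ)‖ = ‖∫ s, g ℓ s‖ := congrArg norm (hsimp ℓ)
    rw [h1]
    have h2 : ‖∫ s, g ℓ s‖ ≤ ∫ s, ‖g ℓ s‖ := norm_integral_le_integral_norm _
    have h3 : ∫ s, ‖g ℓ s‖ ≤ ∫ s, S.indicator (fun _ => C ℓ) s := by
      refine integral_mono_of_nonneg (Filter.Eventually.of_forall fun s => norm_nonneg _)
        ?_ (Filter.Eventually.of_forall (hbound ℓ))
      rw [integrable_indicator_iff hS]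
      exact integrableOn_const hvol.ne
    have h4 : ∫ s, S.indicator (fun _ => C ℓ) s = (volume S).toReal * C ℓ := by
      rw [integral_indicator_const _ hS, smul_eq_mul]; rfl
    linarith [h2, h3, h4.le]
  · -- the sum identity
    calc ∑' ℓ : Fin (b+1) → ℕ, simplexInt b t (F ℓ)
        = ∑' ℓ : Fin (b+1) → ℕ, ∫ s, g ℓ s := by rw [tsum_congr hsimp]
      _ = ∫ s, ∑' ℓ : Fin (b+1) → ℕ, g ℓ s := hexch.symm
      _ = simplexInt b t (fun v =>
            ∏ j : Fin (b + 1), Complex.exp (-Complex.I * (v j : ℂ) * (((a j : ℝ) : ℂ) + c j))) := by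
          rw [simplexInt]
          refine integral_congr_ae (Filter.Eventually.of_forall fun s => ?_)
          by_cases hs : s ∈ S
          · rw [Set.indicator_of_mem hs]
            have hsum : ∀ j : Fin (b+1), Summable fun k : ℕ =>
                ‖(-Complex.I * ((σ s j : ℝ):ℂ)) ^ k / (Nat.factorial k : ℂ) * c j ^ k *
                  Complex.exp (-Complex.I * ((σ s j : ℝ):ℂ) * ((a j : ℝ):ℂ))‖ := by
              intro j
              refine Summable.of_nonneg_of_le (fun k => norm_nonneg _)
                (fun k => aux_norm_term t (σ s j) (hσmem s hs j).1 (hσmem s hs j).2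
                  (c j) (a j) k)
                (Real.summable_pow_div_factorial _)
            have := aux_tsum_pi (b+1)
              (fun j k => (-Complex.I * ((σ s j : ℝ):ℂ)) ^ k / (Nat.factorial k : ℂ) * c j ^ k *
                Complex.exp (-Complex.I * ((σ s j : ℝ):ℂ) * ((a j : ℝ):ℂ))) hsum
            calc ∑' ℓ : Fin (b+1) → ℕ, g ℓ s
                = ∑' ℓ : Fin (b+1) → ℕ, F ℓ (σ s) := by
                  refine tsum_congr fun ℓ => ?_
                  rw [hg_def]; simp [Set.indicator_of_mem hs]
              _ = ∏ j : Fin (b+1), ∑' k : ℕ,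
                    (-Complex.I * ((σ s j : ℝ):ℂ)) ^ k / (Nat.factorial k : ℂ) * c j ^ k *
                      Complex.exp (-Complex.I * ((σ s j : ℝ):ℂ) * ((a j : ℝ):ℂ)) := this
              _ = ∏ j : Fin (b+1),
                    Complex.exp (-Complex.I * ((σ s j : ℝ):ℂ) * (((a j : ℝ):ℂ) + c j)) := by
                  exact Finset.prod_congr rfl fun j _ => aux_exp_sum (σ s j) (c j) (a j)
          · rw [Set.indicator_of_notMem hs]
            have : ∀ ℓ : Fin (b+1) → ℕ, g ℓ s = 0 := by
              intro ℓ; rw [hg_def]; simp [Set.indicator_of_notMem hs]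
            exact (tsum_congr this).trans tsum_zero
end
end
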